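/- arXiv:2308.05442 — 8 statements merged into one kernel-verified Lean document; each statement's English description precedes it below -/
import Mathlib

section
/- Let G be a (P3 ∪ P2, house)-free graph such that every proper induced subgraph G' of G satisfies χ(G') ≤ 2ω(G'), while χ(G) > 2ω(G). Then G has no good subgraph. That is, there is no induced subgraph H of G with χ(H) ≤ ω(H) such that, setting I = {v ∈ V(G) \ V(H) : v has no neighbor in V(H)}, R = {v ∈ V(G) \ V(H) : v is adjacent to every vertex of V(H)}, and T = V(G) \ (V(H) ∪ I ∪ R), one has χ(G[I]) ≤ χ(H) and χ(G[T]) ≤ χ(H). -/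
open SimpleGraph

/-- The disjoint union of a path on 3 vertices and a path on 2 vertices,
with edges `01`, `12` and `34`. -/
def P3uP2 : SimpleGraph (Fin 5) :=
  SimpleGraph.fromEdgeSet {s(0, 1), s(1, 2), s(3, 4)}

/-- The house graph: the complement of the path on 5 vertices. -/
def house : SimpleGraph (Fin 5) := (SimpleGraph.pathGraph 5)ᶜ

/-- `G` has no induced subgraph isomorphic to `H`. -/
def IsInducedFree {V : Type*} {W : Type*} (G : SimpleGraph V) (H : SimpleGraph W) : Prop :=
  IsEmpty (H ↪g G)

/-- The vertex set `H` induces a *good subgraph* of `G`: the induced subgraph `G[H]`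
satisfies `χ(G[H]) ≤ ω(G[H])`, and with `I` the set of vertices outside `H` with no
neighbor in `H` and `T` the set of vertices outside `H` having both a neighbor and a
non-neighbor in `H`, we have `χ(G[I]) ≤ χ(G[H])` and `χ(G[T]) ≤ χ(G[H])`. -/
def IsGoodSubgraph {V : Type*} (G : SimpleGraph V) (H : Set V) : Prop :=
  (G.induce H).chromaticNumber ≤ ((G.induce H).cliqueNum : ℕ∞) ∧
  (G.induce {u | u ∉ H ∧ ∀ h ∈ H, ¬ G.Adj u h}).chromaticNumber ≤
    (G.induce H).chromaticNumber ∧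
  (G.induce {u | u ∉ H ∧ (∃ h ∈ H, G.Adj u h) ∧ ∃ h ∈ H, ¬ G.Adj u h}).chromaticNumber ≤
    (G.induce H).chromaticNumber

/-!
`H` and `I` are anticomplete, so together they are coloured with `χ(H) ≤ ω(H)` colours; `T` takes
`ω(H)` fresh colours, and `R`, a proper induced subgraph as soon as `H ≠ ∅`, takes `2ω(R)` more
by minimality. As `R` is complete to `H`, `ω(H) + ω(R) ≤ ω(G)`, so `χ(G) ≤ 2ω(G)`. Finally `H`
cannot be empty: then `I` is everything, and `χ(G) = χ(G[I]) ≤ χ(G[∅]) = 0`.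
-/

namespace SimpleGraph

variable {V : Type*} (G : SimpleGraph V)

-- The sets `I`, `T` and `R` of the paper.
def anticompleteVerts (H : Set V) : Set V := {u | u ∉ H ∧ ∀ h ∈ H, ¬ G.Adj u h}

def mixedVerts (H : Set V) : Set V :=
  {u | u ∉ H ∧ (∃ h ∈ H, G.Adj u h) ∧ ∃ h ∈ H, ¬ G.Adj u h}

def completeVerts (H : Set V) : Set V := {u | u ∉ H ∧ ∀ h ∈ H, G.Adj u h}

theorem union_anticompleteVerts_mixedVerts_completeVerts (H : Set V) :
    H ∪ G.anticompleteVerts H ∪ G.mixedVerts H ∪ G.completeVerts H = Set.univ := by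
  refine Set.eq_univ_of_forall fun v => ?_
  simp only [anticompleteVerts, mixedVerts, completeVerts, Set.mem_union, Set.mem_ofPred_eq]
  grind

variable {G}

open Classical in
noncomputable def Coloring.induceUnion {s t : Set V} {α : Type*}
    (cs : (G.induce s).Coloring α) (ct : (G.induce t).Coloring α)
    (hst : ∀ a (ha : a ∈ s) b (hb : b ∈ t), G.Adj a b → cs ⟨a, ha⟩ ≠ ct ⟨b, hb⟩) :
    (G.induce (s ∪ t)).Coloring α :=
  Coloring.mk (fun v => if hv : v.1 ∈ s then cs ⟨v, hv⟩ else ct ⟨v, v.2.resolve_left hv⟩) <| by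
    rintro ⟨u, hu⟩ ⟨v, hv⟩ huv
    dsimp only
    split_ifs with hus hvs hvs
    · exact cs.valid huv
    · exact hst u hus v _ huv
    · exact (hst v hvs u _ huv.symm).symm
    · exact ct.valid huv

theorem Colorable.induce_union {s t : Set V} {m n : ℕ} (hs : (G.induce s).Colorable m)
    (ht : (G.induce t).Colorable n) : (G.induce (s ∪ t)).Colorable (m + n) := by
  obtain ⟨cs⟩ := hs
  obtain ⟨ct⟩ := ht
  refine ⟨Coloring.induceUnion (recolorOfEmbedding _ (Fin.castAddEmb n) cs)
    (recolorOfEmbedding _ (Fin.natAddEmb m) ct) fun _ _ _ _ _ =>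
      Fin.ne_of_lt (Nat.lt_add_right _ (cs _).is_lt)⟩

theorem Colorable.induce_union_of_anticomplete {s t : Set V} {n : ℕ}
    (hst : ∀ a ∈ s, ∀ b ∈ t, ¬ G.Adj a b) (hs : (G.induce s).Colorable n)
    (ht : (G.induce t).Colorable n) : (G.induce (s ∪ t)).Colorable n := by
  obtain ⟨cs⟩ := hs
  obtain ⟨ct⟩ := ht
  exact ⟨Coloring.induceUnion cs ct fun a ha b hb hab => (hst a ha b hb hab).elim⟩

theorem colorable_of_induce_eq_univ {s : Set V} {n : ℕ} (hs : s = Set.univ)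
    (h : (G.induce s).Colorable n) : G.Colorable n := by
  subst hs
  exact (colorable_congr G.induceUnivIso).mp h

theorem cliqueNum_induce_add_cliqueNum_induce_le [Finite V] {s t : Set V}
    (hst : ∀ a ∈ s, ∀ b ∈ t, G.Adj a b) :
    (G.induce s).cliqueNum + (G.induce t).cliqueNum ≤ G.cliqueNum := by
  classical
  obtain ⟨cs, hcs⟩ := (G.induce s).exists_isNClique_cliqueNum
  obtain ⟨ct, hct⟩ := (G.induce t).exists_isNClique_cliqueNum
  set cs' := cs.map (Function.Embedding.subtype _)
  set ct' := ct.map (Function.Embedding.subtype _)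
  have hdisj : Disjoint cs' ct' := by
    refine Finset.disjoint_left.mpr fun a has hat => ?_
    simp only [cs', ct', Finset.mem_map, Function.Embedding.coe_subtype] at has hat
    obtain ⟨a, -, rfl⟩ := has
    obtain ⟨b, -, hb⟩ := hat
    exact G.loopless.irrefl _ (hb ▸ hst a a.2 b b.2)
  have hclique : G.IsClique (↑(cs' ∪ ct') : Set V) := by
    rw [Finset.coe_union, IsClique, Set.pairwise_union]
    refine ⟨?_, ?_, fun a ha b hb _ => ?_⟩
    · simpa [cs'] using isClique_induce_iff.mp hcs.isClique
    · simpa [ct'] using isClique_induce_iff.mp hct.isClique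
    · simp only [cs', ct', Finset.coe_map, Function.Embedding.coe_subtype, Set.mem_image] at ha hb
      obtain ⟨a, -, rfl⟩ := ha
      obtain ⟨b, -, rfl⟩ := hb
      exact ⟨hst a a.2 b b.2, (hst a a.2 b b.2).symm⟩
  calc (G.induce s).cliqueNum + (G.induce t).cliqueNum = (cs' ∪ ct').card := by
        rw [Finset.card_union_of_disjoint hdisj, Finset.card_map, Finset.card_map, hcs.card_eq,
          hct.card_eq]
    _ ≤ G.cliqueNum := hclique.card_le_cliqueNum

end SimpleGraph

namespace IsGoodSubgraph

variable {V : Type*} {G : SimpleGraph V} {H : Set V}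

theorem nonempty [Nonempty V] (hgood : IsGoodSubgraph G H) : H.Nonempty := by
  by_contra! hH
  subst hH
  have hI := hgood.2.1
  rw [chromaticNumber_eq_zero_of_isEmpty (G := G.induce ∅), nonpos_iff_eq_zero,
    chromaticNumber_eq_zero_iff] at hI
  exact hI.elim ⟨Classical.arbitrary V, by simp⟩

theorem colorable (hgood : IsGoodSubgraph G H) {n : ℕ}
    (hR : (G.induce (G.completeVerts H)).Colorable n) :
    G.Colorable (2 * (G.induce H).cliqueNum + n) := by
  obtain ⟨hHω, hIχ, hTχ⟩ := hgood
  set k := (G.induce H).cliqueNum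
  have hH : (G.induce H).Colorable k := chromaticNumber_le_iff_colorable.mp hHω
  have hI : (G.induce (G.anticompleteVerts H)).Colorable k :=
    chromaticNumber_le_iff_colorable.mp (hIχ.trans hHω)
  have hT : (G.induce (G.mixedVerts H)).Colorable k :=
    chromaticNumber_le_iff_colorable.mp (hTχ.trans hHω)
  have hHI := hH.induce_union_of_anticomplete (fun a ha b hb hab => hb.2 a ha hab.symm) hI
  rw [two_mul]
  exact colorable_of_induce_eq_univ (G.union_anticompleteVerts_mixedVerts_completeVerts H)
    ((hHI.induce_union hT).induce_union hR)

end IsGoodSubgraph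

theorem no_good_subgraph_of_minimal_counterexample_general
    {V : Type*} [Fintype V] (G : SimpleGraph V)
    (hmin : ∀ s : Set V, s ≠ Set.univ →
      (G.induce s).chromaticNumber ≤ 2 * ((G.induce s).cliqueNum : ℕ∞))
    (hG : 2 * (G.cliqueNum : ℕ∞) < G.chromaticNumber) :
    ∀ H : Set V, ¬ IsGoodSubgraph G H := by
  intro H hgood
  have : Nonempty V := not_isEmpty_iff.mp fun _ => by
    simp [chromaticNumber_eq_zero_of_isEmpty] at hG
  obtain ⟨v, hv⟩ := hgood.nonempty
  set R := G.completeVerts H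
  have hR : R ≠ Set.univ := fun h => (Set.eq_univ_iff_forall.mp h v).1 hv
  have hRcol : (G.induce R).Colorable (2 * (G.induce R).cliqueNum) :=
    chromaticNumber_le_iff_colorable.mp (by exact_mod_cast hmin R hR)
  have hω : (G.induce H).cliqueNum + (G.induce R).cliqueNum ≤ G.cliqueNum :=
    cliqueNum_induce_add_cliqueNum_induce_le fun a ha b hb => (hb.2 a ha).symm
  have hχ := (hgood.colorable hRcol).chromaticNumber_le
  have : ((2 * (G.induce H).cliqueNum + 2 * (G.induce R).cliqueNum : ℕ) : ℕ∞) ≤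
      2 * (G.cliqueNum : ℕ∞) := by
    exact_mod_cast (by omega)
  exact (hG.trans_le (hχ.trans this)).false

theorem no_good_subgraph_of_minimal_counterexample
    {V : Type*} [Fintype V] (G : SimpleGraph V)
    (h1 : IsInducedFree G P3uP2) (h2 : IsInducedFree G house)
    (hmin : ∀ s : Set V, s ≠ Set.univ →
      (G.induce s).chromaticNumber ≤ 2 * ((G.induce s).cliqueNum : ℕ∞))
    (hG : 2 * (G.cliqueNum : ℕ∞) < G.chromaticNumber) :
    ∀ H : Set V, ¬ IsGoodSubgraph G H :=
  no_good_subgraph_of_minimal_counterexample_general G hmin hG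
end

section
/- Let G be a (P3 ∪ P2, house)-free graph containing vertices v1, v2, v3, v4 that induce a 2K2 with v1 adjacent to v2 and v3 adjacent to v4. For S ⊆ {1,2,3,4}, let N_S be the set of vertices outside {v1,v2,v3,v4} whose neighbors among {v1,v2,v3,v4} are exactly {v_i : i ∈ S}. Let {i,i'} = {1,2} and {j,j'} = {3,4}. Then N_{{i,j}} is anticomplete to N_{{i,j'}} ∪ N_{{i',j}} ∪ N_{{i,i',j'}} ∪ N_{{i',j,j'}} (no edges between them), and N_{{i,j}} is complete to N_{{i,i',j}} ∪ N_{{i,j,j'}} ∪ N_{{1,2,3,4}} (all edges between them present). -/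
open SimpleGraph

/-- The four distinct vertices `v 0, v 1, v 2, v 3` induce a `2K₂` in `G`,
with edges `v 0 — v 1` and `v 2 — v 3` (here `v 0, v 1, v 2, v 3` play the roles of
`v₁, v₂, v₃, v₄`). -/
def Induces2K2 {V : Type*} (G : SimpleGraph V) (v : Fin 4 → V) : Prop :=
  Function.Injective v ∧ G.Adj (v 0) (v 1) ∧ G.Adj (v 2) (v 3) ∧
  ¬ G.Adj (v 0) (v 2) ∧ ¬ G.Adj (v 0) (v 3) ∧ ¬ G.Adj (v 1) (v 2) ∧ ¬ G.Adj (v 1) (v 3)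

/-- `NS G v S` is the set of vertices outside `{v 0, v 1, v 2, v 3}` that are adjacent
to `v i` exactly for the indices `i ∈ S`. -/
def NS {V : Type*} (G : SimpleGraph V) (v : Fin 4 → V) (S : Finset (Fin 4)) : Set V :=
  {u | (∀ i, u ≠ v i) ∧ ∀ i, G.Adj u (v i) ↔ i ∈ S}

/-- `X` is anticomplete to `Y`: there is no edge between `X` and `Y`. -/
def Anticomplete {V : Type*} (G : SimpleGraph V) (X Y : Set V) : Prop :=
  ∀ x ∈ X, ∀ y ∈ Y, ¬ G.Adj x y

/-- `X` is complete to `Y`: every vertex of `X` is adjacent to every vertex of `Y`. -/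
def CompleteTo {V : Type*} (G : SimpleGraph V) (X Y : Set V) : Prop :=
  ∀ x ∈ X, ∀ y ∈ Y, G.Adj x y

/-! Let `x ∈ N_{i,j}`. If `y ∈ N_{i,j'}` were adjacent to `x`, then `x y v_{j'} v_j` would be an
induced square with roof `v_i` over the edge `xy`; if `y ∈ N_{i,i',j}` were nonadjacent to `x`,
then `v_i y v_j x` would be an induced square with roof `v_{i'}` over the edge `v_i y`. Both
arguments only use the adjacencies of `y` to three of the `v_k`, so they also cover the sets with
one more neighbour among the `v_k`, and the remaining sets are handled by swapping the roles of
the edges `v_i v_{i'}` and `v_j v_{j'}`. -/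

section

variable {V : Type*} {G : SimpleGraph V}

lemma house_adj_iff (u w : Fin 5) :
    house.Adj u w ↔ u ≠ w ∧ ¬((u : ℕ) + 1 = w ∨ (w : ℕ) + 1 = u) := by
  simp [house, compl_adj, pathGraph_adj]

/-- The square `a b c d` with roof `r` over the edge `ab` cannot be induced in a house-free graph.
Distinctness of the five vertices follows from the adjacency pattern. -/
lemma IsInducedFree.false_of_house (hG : IsInducedFree G house) {r a b c d : V}
    (hra : G.Adj r a) (hrb : G.Adj r b) (hab : G.Adj a b) (hbc : G.Adj b c) (hcd : G.Adj c d)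
    (hda : G.Adj d a) (hrc : ¬G.Adj r c) (hrd : ¬G.Adj r d) (hac : ¬G.Adj a c)
    (hbd : ¬G.Adj b d) : False := by
  -- `a c r d b` is an induced path in the complement of `G`
  let p : Fin 5 → V := ![a, c, r, d, b]
  have hp : Function.Injective p := by
    intro u w h
    fin_cases u <;> fin_cases w <;> simp_all [p, adj_comm]
  refine hG.false ⟨⟨p, hp⟩, fun {u w} => ?_⟩
  rw [house_adj_iff]
  fin_cases u <;> fin_cases w <;> simp [p, *, hda.symm, adj_comm]

namespace IsInducedFree

variable (hG : IsInducedFree G house)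
include hG

/-- If `x ~ y`, then `x y d c` is an induced square with roof `a`. -/
lemma not_adj_of_house {a c d x y : V} (hcd : G.Adj c d) (hxa : G.Adj x a) (hxc : G.Adj x c)
    (hya : G.Adj y a) (hyd : G.Adj y d) (hxd : ¬G.Adj x d) (hyc : ¬G.Adj y c)
    (hac : ¬G.Adj a c) (had : ¬G.Adj a d) : ¬G.Adj x y := fun hxy =>
  hG.false_of_house hxa.symm hya.symm hxy hyd hcd.symm hxc.symm had hac hxd hyc

/-- If `x ≁ y`, then `a y c x` is an induced square with roof `b`. -/
lemma adj_of_house {a b c x y : V} (hab : G.Adj a b) (hxa : G.Adj x a) (hxc : G.Adj x c)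
    (hya : G.Adj y a) (hyb : G.Adj y b) (hyc : G.Adj y c) (hxb : ¬G.Adj x b)
    (hac : ¬G.Adj a c) (hbc : ¬G.Adj b c) : G.Adj x y := by
  by_contra hxy
  exact hG.false_of_house hab.symm hyb.symm hya.symm hyc hxc.symm hxa hbc (fun h => hxb h.symm)
    hac (fun h => hxy h.symm)

end IsInducedFree

lemma Finset.pair_eq_pair_iff {α : Type*} [DecidableEq α] {x y z w : α} :
    ({x, y} : Finset α) = {z, w} ↔ x = z ∧ y = w ∨ x = w ∧ y = z := by
  rw [← Finset.coe_inj, Finset.coe_pair, Finset.coe_pair, Set.pair_eq_pair_iff]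

section NS

variable {v : Fin 4 → V}

lemma adj_of_mem_NS {S : Finset (Fin 4)} {x : V} (hx : x ∈ NS G v S) {k : Fin 4} (hk : k ∈ S) :
    G.Adj x (v k) :=
  (hx.2 k).2 hk

lemma not_adj_of_mem_NS {S : Finset (Fin 4)} {x : V} (hx : x ∈ NS G v S) {k : Fin 4}
    (hk : k ∉ S) : ¬G.Adj x (v k) :=
  fun h => hk ((hx.2 k).1 h)

variable {I I' J J' : Fin 4} (hI : G.Adj (v I) (v I')) (hJ : G.Adj (v J) (v J'))
  (hIJ : ∀ k ∈ ({I, I'} : Finset (Fin 4)), ∀ l ∈ ({J, J'} : Finset (Fin 4)), ¬G.Adj (v k) (v l))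
include hI hJ hIJ

lemma indices_pairwise_ne : I ≠ I' ∧ J ≠ J' ∧ I ≠ J ∧ I ≠ J' ∧ I' ≠ J ∧ I' ≠ J' := by
  refine ⟨fun h => hI.ne (congrArg v h), fun h => hJ.ne (congrArg v h), ?_, ?_, ?_, ?_⟩ <;>
    rintro rfl <;> simp_all [adj_comm]

lemma adj_pattern_of_mem_NS_pair {x : V} (hx : x ∈ NS G v {I, J}) :
    G.Adj x (v I) ∧ G.Adj x (v J) ∧ ¬G.Adj x (v I') ∧ ¬G.Adj x (v J') := by
  obtain ⟨h₁, h₂, h₃, h₄, h₅, h₆⟩ := indices_pairwise_ne hI hJ hIJ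
  refine ⟨adj_of_mem_NS hx ?_, adj_of_mem_NS hx ?_, not_adj_of_mem_NS hx ?_,
    not_adj_of_mem_NS hx ?_⟩ <;> simp [*, Ne.symm]

lemma anticomplete_NS_of_houseFree (hG : IsInducedFree G house) :
    Anticomplete G (NS G v {I, J})
      (NS G v {I, J'} ∪ NS G v {I', J} ∪ NS G v {I, I', J'} ∪ NS G v {I', J, J'}) := by
  obtain ⟨h₁, h₂, h₃, h₄, h₅, h₆⟩ := indices_pairwise_ne hI hJ hIJ
  intro x hx
  obtain ⟨hxI, hxJ, hxI', hxJ'⟩ := adj_pattern_of_mem_NS_pair hI hJ hIJ hx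
  have hxy₁ {y : V} (hyI : G.Adj y (v I)) (hyJ' : G.Adj y (v J')) (hyJ : ¬G.Adj y (v J)) :
      ¬G.Adj x y :=
    hG.not_adj_of_house hJ hxI hxJ hyI hyJ' hxJ' hyJ (hIJ I (by simp) J (by simp))
      (hIJ I (by simp) J' (by simp))
  have hxy₂ {y : V} (hyJ : G.Adj y (v J)) (hyI' : G.Adj y (v I')) (hyI : ¬G.Adj y (v I)) :
      ¬G.Adj x y :=
    hG.not_adj_of_house hI hxJ hxI hyJ hyI' hxI' hyI (fun h => hIJ I (by simp) J (by simp) h.symm)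
      (fun h => hIJ I' (by simp) J (by simp) h.symm)
  rintro y (((hy | hy) | hy) | hy)
  · exact hxy₁ (adj_of_mem_NS hy (by simp)) (adj_of_mem_NS hy (by simp))
      (not_adj_of_mem_NS hy (by simp [*, Ne.symm]))
  · exact hxy₂ (adj_of_mem_NS hy (by simp)) (adj_of_mem_NS hy (by simp))
      (not_adj_of_mem_NS hy (by simp [*, Ne.symm]))
  · exact hxy₁ (adj_of_mem_NS hy (by simp)) (adj_of_mem_NS hy (by simp))
      (not_adj_of_mem_NS hy (by simp [*, Ne.symm]))
  · exact hxy₂ (adj_of_mem_NS hy (by simp)) (adj_of_mem_NS hy (by simp))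
      (not_adj_of_mem_NS hy (by simp [*, Ne.symm]))

lemma completeTo_NS_of_houseFree (hG : IsInducedFree G house) :
    CompleteTo G (NS G v {I, J})
      (NS G v {I, I', J} ∪ NS G v {I, J, J'} ∪ NS G v {0, 1, 2, 3}) := by
  intro x hx
  obtain ⟨hxI, hxJ, hxI', hxJ'⟩ := adj_pattern_of_mem_NS_pair hI hJ hIJ hx
  have hxy₁ {y : V} (hyI : G.Adj y (v I)) (hyI' : G.Adj y (v I')) (hyJ : G.Adj y (v J)) :
      G.Adj x y :=
    hG.adj_of_house hI hxI hxJ hyI hyI' hyJ hxI' (hIJ I (by simp) J (by simp))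
      (hIJ I' (by simp) J (by simp))
  have hxy₂ {y : V} (hyJ : G.Adj y (v J)) (hyJ' : G.Adj y (v J')) (hyI : G.Adj y (v I)) :
      G.Adj x y :=
    hG.adj_of_house hJ hxJ hxI hyJ hyJ' hyI hxJ' (fun h => hIJ I (by simp) J (by simp) h.symm)
      (fun h => hIJ I (by simp) J' (by simp) h.symm)
  have mem_univ (k : Fin 4) : k ∈ ({0, 1, 2, 3} : Finset (Fin 4)) := by fin_cases k <;> simp
  rintro y ((hy | hy) | hy)
  · exact hxy₁ (adj_of_mem_NS hy (by simp)) (adj_of_mem_NS hy (by simp))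
      (adj_of_mem_NS hy (by simp))
  · exact hxy₂ (adj_of_mem_NS hy (by simp)) (adj_of_mem_NS hy (by simp))
      (adj_of_mem_NS hy (by simp))
  · exact hxy₁ (adj_of_mem_NS hy (mem_univ I)) (adj_of_mem_NS hy (mem_univ I'))
      (adj_of_mem_NS hy (mem_univ J))

end NS

end

theorem lemma_c0_first_part_general
    {V : Type*} (G : SimpleGraph V)
    (h2 : IsInducedFree G house)
    (v : Fin 4 → V) (h2k2 : Induces2K2 G v)
    (i i' j j' : Fin 4)
    (hii' : ({i, i'} : Finset (Fin 4)) = {0, 1})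
    (hjj' : ({j, j'} : Finset (Fin 4)) = {2, 3}) :
    Anticomplete G (NS G v {i, j})
      (NS G v {i, j'} ∪ NS G v {i', j} ∪ NS G v {i, i', j'} ∪ NS G v {i', j, j'}) ∧
    CompleteTo G (NS G v {i, j})
      (NS G v {i, i', j} ∪ NS G v {i, j, j'} ∪ NS G v {0, 1, 2, 3}) := by
  obtain ⟨-, h01, h23, h02, h03, h12, h13⟩ := h2k2
  have hI : G.Adj (v i) (v i') := by
    rcases Finset.pair_eq_pair_iff.mp hii' with ⟨rfl, rfl⟩ | ⟨rfl, rfl⟩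
    exacts [h01, h01.symm]
  have hJ : G.Adj (v j) (v j') := by
    rcases Finset.pair_eq_pair_iff.mp hjj' with ⟨rfl, rfl⟩ | ⟨rfl, rfl⟩
    exacts [h23, h23.symm]
  have hIJ : ∀ k ∈ ({i, i'} : Finset (Fin 4)), ∀ l ∈ ({j, j'} : Finset (Fin 4)),
      ¬G.Adj (v k) (v l) := by
    rw [hii', hjj']
    simp [h02, h03, h12, h13]
  exact ⟨anticomplete_NS_of_houseFree hI hJ hIJ h2, completeTo_NS_of_houseFree hI hJ hIJ h2⟩

theorem lemma_c0_first_part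
    {V : Type*} [Fintype V] (G : SimpleGraph V)
    (h1 : IsInducedFree G P3uP2) (h2 : IsInducedFree G house)
    (v : Fin 4 → V) (h2k2 : Induces2K2 G v)
    (i i' j j' : Fin 4)
    (hii' : ({i, i'} : Finset (Fin 4)) = {0, 1})
    (hjj' : ({j, j'} : Finset (Fin 4)) = {2, 3}) :
    Anticomplete G (NS G v {i, j})
      (NS G v {i, j'} ∪ NS G v {i', j} ∪ NS G v {i, i', j'} ∪ NS G v {i', j, j'}) ∧
    CompleteTo G (NS G v {i, j})
      (NS G v {i, i', j} ∪ NS G v {i, j, j'} ∪ NS G v {0, 1, 2, 3}) :=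
  lemma_c0_first_part_general G h2 v h2k2 i i' j j' hii' hjj'
end

section
/- Let G be a (P3 ∪ P2, house)-free graph such that every proper induced subgraph G' of G satisfies χ(G') ≤ 2ω(G'), while χ(G) > 2ω(G), and suppose v1, v2, v3, v4 induce a 2K2 in G with edges v1v2 and v3v4. Then for every S ⊆ {1,2,3,4} with |S| = 3, the induced subgraph G[N_S] is P3-free (equivalently, a disjoint union of cliques). -/
open SimpleGraph

/-!
Let `a – b – c` be an induced `P₃` inside `N_S`, let `w = v_k` be the vertex of the `2K₂` missed
by `S`, `y` its partner and `x` a vertex of the other edge, so that `a, b, c` are all adjacent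
to `x` and `y` but not to `w`. Any neighbour `z` of `w` outside `N(a)` produces either a house
(on `z, a, w, x, y`, on `y, x, z, a, c`, on `y, z, a, w, b` or on `y, z, b, w, c`) or an induced
`P₃ ∪ P₂` (`a – x – c` with `w – z`, or `a – b – c` with `w – z`). Hence `N(w) ⊆ N(a)`, and
colouring `w` like `a` turns a colouring of `G - w` into one of `G`, which contradicts the
criticality of `G`.
-/

open Function

section

variable {V W : Type*} {G : SimpleGraph V} {H : SimpleGraph W}

lemma not_isInducedFree_of_adj_iff {f : W → V} (hf : Injective f)
    (hadj : ∀ i j, G.Adj (f i) (f j) ↔ H.Adj i j) : ¬ IsInducedFree G H :=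
  fun h => h.false ⟨⟨f, hf⟩, hadj _ _⟩

lemma adj_iff_adj_of_map_eq {f : W → V} (hadj : ∀ i j, G.Adj (f i) (f j) ↔ H.Adj i j)
    {i j : W} (h : f i = f j) (k : W) : H.Adj i k ↔ H.Adj j k := by
  rw [← hadj, ← hadj, h]

lemma not_isInducedFree_house {x₀ x₁ x₂ x₃ x₄ : V}
    (h₀₂ : G.Adj x₀ x₂) (h₀₃ : G.Adj x₀ x₃) (h₀₄ : G.Adj x₀ x₄)
    (h₁₃ : G.Adj x₁ x₃) (h₁₄ : G.Adj x₁ x₄) (h₂₄ : G.Adj x₂ x₄)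
    (h₀₁ : ¬ G.Adj x₀ x₁) (h₁₂ : ¬ G.Adj x₁ x₂) (h₂₃ : ¬ G.Adj x₂ x₃) (h₃₄ : ¬ G.Adj x₃ x₄) :
    ¬ IsInducedFree G house := by
  have hadj : ∀ i j, G.Adj (![x₀, x₁, x₂, x₃, x₄] i) (![x₀, x₁, x₂, x₃, x₄] j) ↔
      house.Adj i j := by
    intro i j
    fin_cases i <;> fin_cases j <;> simp [house, pathGraph_adj, G.adj_comm, *]
  -- distinct vertices of the house have distinct neighbourhoods
  have htwins : ∀ i j : Fin 5, (∀ k, house.Adj i k ↔ house.Adj j k) → i = j := by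
    simp only [house, compl_adj, pathGraph_adj]
    decide
  exact not_isInducedFree_of_adj_iff
    (fun i j h => htwins i j (adj_iff_adj_of_map_eq hadj h)) hadj

lemma not_isInducedFree_P3uP2 {x₀ x₁ x₂ x₃ x₄ : V}
    (h₀₁ : G.Adj x₀ x₁) (h₁₂ : G.Adj x₁ x₂) (h₃₄ : G.Adj x₃ x₄)
    (h₀₂ : ¬ G.Adj x₀ x₂) (h₀₃ : ¬ G.Adj x₀ x₃) (h₀₄ : ¬ G.Adj x₀ x₄)
    (h₁₃ : ¬ G.Adj x₁ x₃) (h₁₄ : ¬ G.Adj x₁ x₄) (h₂₃ : ¬ G.Adj x₂ x₃) (h₂₄ : ¬ G.Adj x₂ x₄)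
    (hne : x₀ ≠ x₂) : ¬ IsInducedFree G P3uP2 := by
  have hadj : ∀ i j, G.Adj (![x₀, x₁, x₂, x₃, x₄] i) (![x₀, x₁, x₂, x₃, x₄] j) ↔
      P3uP2.Adj i j := by
    intro i j
    fin_cases i <;> fin_cases j <;> simp [P3uP2, G.adj_comm, *]
  -- the ends of the `P₃` are the only twins of `P₃ ∪ P₂`
  have htwins : ∀ i j : Fin 5, (∀ k, P3uP2.Adj i k ↔ P3uP2.Adj j k) →
      i = j ∨ i = 0 ∧ j = 2 ∨ i = 2 ∧ j = 0 := by
    simp only [P3uP2, fromEdgeSet_adj, Set.mem_insert_iff, Set.mem_singleton_iff, Sym2.eq_iff]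
    decide
  refine not_isInducedFree_of_adj_iff (fun i j h => ?_) hadj
  rcases htwins i j (adj_iff_adj_of_map_eq hadj h) with rfl | ⟨rfl, rfl⟩ | ⟨rfl, rfl⟩
  · rfl
  · exact absurd h hne
  · exact absurd h hne.symm

lemma exists_induced_path_three (e : pathGraph 3 ↪g H) :
    ∃ a b c, H.Adj a b ∧ H.Adj b c ∧ ¬ H.Adj a c ∧ a ≠ c :=
  ⟨e 0, e 1, e 2, e.map_adj_iff.2 (by simp [pathGraph_adj]),
    e.map_adj_iff.2 (by simp [pathGraph_adj]),
    fun h => by simpa [pathGraph_adj] using e.map_adj_iff.1 h, e.injective.ne (by decide)⟩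

lemma chromaticNumber_le_induce_compl_singleton {w a : V} (hne : a ≠ w)
    (hdom : G.neighborSet w ⊆ G.neighborSet a) :
    G.chromaticNumber ≤ (G.induce {w}ᶜ).chromaticNumber := by
  classical
  refine chromaticNumber_mono_of_hom
    ⟨fun x => if hx : x = w then ⟨a, hne⟩ else ⟨x, hx⟩, fun {x y} hxy => ?_⟩
  by_cases hx : x = w <;> by_cases hy : y = w
  · exact absurd (hx ▸ hy ▸ hxy) (G.irrefl)
  · subst hx
    simpa [hy] using hdom hxy
  · subst hy
    simpa [hx] using (hdom hxy.symm).symm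
  · simpa [hx, hy] using hxy

lemma neighborSet_not_subset_of_critical [Finite V]
    (hmin : ∀ s : Set V, s ≠ Set.univ →
      (G.induce s).chromaticNumber ≤ 2 * ((G.induce s).cliqueNum : ℕ∞))
    (hG : 2 * (G.cliqueNum : ℕ∞) < G.chromaticNumber) {w a : V} (hne : a ≠ w) :
    ¬ G.neighborSet w ⊆ G.neighborSet a := by
  intro hdom
  refine hG.not_ge ?_
  calc G.chromaticNumber ≤ (G.induce {w}ᶜ).chromaticNumber :=
        chromaticNumber_le_induce_compl_singleton hne hdom
    _ ≤ 2 * ((G.induce {w}ᶜ).cliqueNum : ℕ∞) :=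
        hmin _ (Set.compl_ne_univ.2 (Set.singleton_nonempty w))
    _ ≤ 2 * (G.cliqueNum : ℕ∞) := by gcongr; exact G.cliqueNum_induce_le _

lemma neighborSet_subset_of_induced_path_in_common_neighborhood
    (h₁ : IsInducedFree G P3uP2) (h₂ : IsInducedFree G house) {x y w a b c : V} {s : Set V}
    (hyw : G.Adj y w) (hxy : ¬ G.Adj x y) (hxw : ¬ G.Adj x w)
    (hs : ∀ u ∈ s, G.Adj u x ∧ G.Adj u y ∧ ¬ G.Adj u w)
    (ha : a ∈ s) (hb : b ∈ s) (hc : c ∈ s)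
    (hab : G.Adj a b) (hbc : G.Adj b c) (hac : ¬ G.Adj a c) (hne : a ≠ c) :
    G.neighborSet w ⊆ G.neighborSet a := by
  obtain ⟨hax, hay, haw⟩ := hs a ha
  obtain ⟨hbx, hby, hbw⟩ := hs b hb
  obtain ⟨hcx, hcy, hcw⟩ := hs c hc
  intro z (hwz : G.Adj w z)
  by_contra haz
  change ¬ G.Adj a z at haz
  by_cases hzy : G.Adj z y
  · by_cases hzx : G.Adj z x
    · exact not_isInducedFree_house hwz.symm hzx hzy hax hay hyw.symm
        (fun h => haz h.symm) haw (fun h => hxw h.symm) hxy h₂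
    by_cases hzc : G.Adj z c
    · exact not_isInducedFree_house hzy.symm hay.symm hcy.symm hax.symm hcx.symm hzc
        (fun h => hxy h.symm) (fun h => hzx h.symm) (fun h => haz h.symm) hac h₂
    · exact not_isInducedFree_P3uP2 hax hcx.symm hwz hac haw haz hxw (fun h => hzx h.symm)
        hcw (fun h => hzc h.symm) hne h₁
  · by_cases hzb : G.Adj z b
    · exact not_isInducedFree_house hay.symm hyw hby.symm hwz.symm hzb hab
        (fun h => hzy h.symm) (fun h => haz h.symm) haw (fun h => hbw h.symm) h₂
    by_cases hzc : G.Adj z c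
    · exact not_isInducedFree_house hby.symm hyw hcy.symm hwz.symm hzc hbc
        (fun h => hzy h.symm) hzb hbw (fun h => hcw h.symm) h₂
    · exact not_isInducedFree_P3uP2 hab hbc hwz hac haw haz hbw (fun h => hzb h.symm)
        hcw (fun h => hzc h.symm) hne h₁

end

theorem F1_NS_card_three_P3_free
    {V : Type*} [Fintype V] (G : SimpleGraph V)
    (h1 : IsInducedFree G P3uP2) (h2 : IsInducedFree G house)
    (hmin : ∀ s : Set V, s ≠ Set.univ →
      (G.induce s).chromaticNumber ≤ 2 * ((G.induce s).cliqueNum : ℕ∞))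
    (hG : 2 * (G.cliqueNum : ℕ∞) < G.chromaticNumber)
    (v : Fin 4 → V) (h2k2 : Induces2K2 G v) :
    ∀ S : Finset (Fin 4), S.card = 3 →
      IsInducedFree (G.induce (NS G v S)) (SimpleGraph.pathGraph 3) := by
  obtain ⟨-, h01, h23, h02, h03, h12, h13⟩ := h2k2
  intro S hS
  refine ⟨fun e => ?_⟩
  obtain ⟨a, b, c, hab, hbc, hac, hne⟩ := exists_induced_path_three e
  have key : ∀ i j k, i ∈ S → j ∈ S → k ∉ S →
      G.Adj (v j) (v k) → ¬ G.Adj (v i) (v j) → ¬ G.Adj (v i) (v k) → False :=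
    fun i j k hi hj hk hjk hij hik =>
      neighborSet_not_subset_of_critical hmin hG (a.2.1 k)
        (neighborSet_subset_of_induced_path_in_common_neighborhood h1 h2 hjk hij hik
          (fun u hu => ⟨(hu.2 i).2 hi, (hu.2 j).2 hj, mt (hu.2 k).1 hk⟩)
          a.2 b.2 c.2 hab hbc hac (Subtype.coe_injective.ne hne))
  rcases (by decide : ∀ T : Finset (Fin 4), T.card = 3 →
      T = {0, 1, 2} ∨ T = {0, 1, 3} ∨ T = {0, 2, 3} ∨ T = {1, 2, 3}) S hS
    with rfl | rfl | rfl | rfl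
  · exact key 0 2 3 (by decide) (by decide) (by decide) h23 h02 h03
  · exact key 0 3 2 (by decide) (by decide) (by decide) h23.symm h03 h02
  · exact key 2 0 1 (by decide) (by decide) (by decide) h01 (h02 ·.symm) (h12 ·.symm)
  · exact key 2 1 0 (by decide) (by decide) (by decide) h01.symm (h12 ·.symm) (h02 ·.symm)
end

section
/- Let G be a (P3 ∪ P2)-free graph and suppose v1, v2, v3, v4 induce a 2K2 in G with edges v1v2 and v3v4. Then N_{{1,2}} and N_{{3,4}} are both cliques of G. -/
/-! Two non-adjacent vertices of `N_{1,2}` form, with `v₁`, an induced `P₃` that has no edge to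
`v₃v₄`, hence an induced `P₃ ∪ P₂`; symmetrically for `N_{3,4}`. -/

open SimpleGraph

theorem IsInducedFree.false_of_P3_anticomplete_P2 {V : Type*} {G : SimpleGraph V}
    (hG : IsInducedFree G P3uP2) {a b c d e : V}
    (hab : G.Adj a b) (hbc : G.Adj b c) (hde : G.Adj d e) (hac : ¬ G.Adj a c)
    (hne : a ≠ c) (had : ¬ G.Adj a d) (hae : ¬ G.Adj a e) (hbd : ¬ G.Adj b d)
    (hbe : ¬ G.Adj b e) (hcd : ¬ G.Adj c d) (hce : ¬ G.Adj c e) : False := by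
  have := hab.ne; have := hbc.ne; have := hde.ne
  have : a ≠ d := fun h => hae (h ▸ hde)
  have : a ≠ e := fun h => had (h ▸ hde.symm)
  have : b ≠ d := fun h => hbe (h ▸ hde)
  have : b ≠ e := fun h => hbd (h ▸ hde.symm)
  have : c ≠ d := fun h => hce (h ▸ hde)
  have : c ≠ e := fun h => hcd (h ▸ hde.symm)
  have hinj : Function.Injective ![a, b, c, d, e] := by
    intro i j h
    fin_cases i <;> fin_cases j <;> simp_all [eq_comm]
  refine hG.false ⟨⟨_, hinj⟩, fun {i j} => ?_⟩
  fin_cases i <;> fin_cases j <;>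
    simp [P3uP2, Sym2.eq_swap, G.adj_comm, *]

theorem IsInducedFree.isClique_neighborSet_diff {V : Type*} {G : SimpleGraph V}
    (hG : IsInducedFree G P3uP2) {b d e : V} (hde : G.Adj d e) (hbd : ¬ G.Adj b d)
    (hbe : ¬ G.Adj b e) :
    G.IsClique (G.neighborSet b \ (G.neighborSet d ∪ G.neighborSet e)) := by
  rintro x ⟨hbx, hx⟩ y ⟨hby, hy⟩ hxy
  by_contra hnxy
  simp only [Set.mem_union, mem_neighborSet, not_or, G.adj_comm d, G.adj_comm e] at hbx hby hx hy
  exact hG.false_of_P3_anticomplete_P2 hbx.symm hby hde hnxy hxy hx.1 hx.2 hbd hbe hy.1 hy.2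

theorem NS_subset_neighborSet_diff {V : Type*} (G : SimpleGraph V) (v : Fin 4 → V)
    {S : Finset (Fin 4)} {i j k : Fin 4} (hi : i ∈ S) (hj : j ∉ S) (hk : k ∉ S) :
    NS G v S ⊆ G.neighborSet (v i) \ (G.neighborSet (v j) ∪ G.neighborSet (v k)) := by
  rintro u ⟨-, hu⟩
  simp only [Set.mem_sdiff, Set.mem_union, mem_neighborSet, not_or, G.adj_comm _ u, hu]
  exact ⟨hi, hj, hk⟩

theorem F3_N12_N34_cliques_general
    {V : Type*} (G : SimpleGraph V)
    (h1 : IsInducedFree G P3uP2)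
    (v : Fin 4 → V) (h2k2 : Induces2K2 G v) :
    G.IsClique (NS G v {0, 1}) ∧ G.IsClique (NS G v {2, 3}) := by
  obtain ⟨-, h01, h23, h02, h03, h12, -⟩ := h2k2
  exact ⟨(h1.isClique_neighborSet_diff h23 h02 h03).subset
      (NS_subset_neighborSet_diff G v (by decide) (by decide) (by decide)),
    (h1.isClique_neighborSet_diff h01 (mt G.adj_symm h02) (mt G.adj_symm h12)).subset
      (NS_subset_neighborSet_diff G v (by decide) (by decide) (by decide))⟩

theorem F3_N12_N34_cliques
    {V : Type*} [Fintype V] (G : SimpleGraph V)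
    (h1 : IsInducedFree G P3uP2)
    (v : Fin 4 → V) (h2k2 : Induces2K2 G v) :
    G.IsClique (NS G v {0, 1}) ∧ G.IsClique (NS G v {2, 3}) :=
  F3_N12_N34_cliques_general G h1 v h2k2
end

section
/- Let G be a (P3 ∪ P2)-free graph and suppose v1, v2, v3, v4 induce a 2K2 in G with edges v1v2 and v3v4. Let A be the set of vertices of G with no neighbor in {v1,v2,v3,v4} (and not in {v1,v2,v3,v4}). Then A is anticomplete to N_{{1,2}} ∪ N_{{3,4}}: there is no edge between A and N_{{1,2}} ∪ N_{{3,4}}. -/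
/-! An edge from `a ∈ A` to `y ∈ N_{1,2}` would make `a - y - v₁` an induced `P₃` which, together
with the edge `v₃v₄`, induces a `P₃ ∪ P₂`; symmetrically for `N_{3,4}`. -/

open SimpleGraph

/-- The pairs of vertices other than `a, c` are distinct because some vertex is adjacent to one
of the two but not to the other. -/
lemma nonempty_P3uP2_embedding {V : Type*} {G : SimpleGraph V} {a b c d e : V} (hac : a ≠ c)
    (hab : G.Adj a b) (hbc : G.Adj b c) (hde : G.Adj d e) (hnac : ¬ G.Adj a c)
    (hnad : ¬ G.Adj a d) (hnae : ¬ G.Adj a e) (hnbd : ¬ G.Adj b d) (hnbe : ¬ G.Adj b e)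
    (hncd : ¬ G.Adj c d) (hnce : ¬ G.Adj c e) :
    Nonempty (P3uP2 ↪g G) := by
  have hinj : Function.Injective ![a, b, c, d, e] := by
    intro i j hij
    fin_cases i <;> fin_cases j <;> simp at hij ⊢ <;> subst_vars <;>
      simp_all [G.adj_comm]
  refine ⟨⟨⟨_, hinj⟩, fun {i j} => ?_⟩⟩
  fin_cases i <;> fin_cases j <;> simp [P3uP2, G.adj_comm, *]

lemma not_adj_of_mem_NS_empty_of_mem_NS {V : Type*} {G : SimpleGraph V}
    (hG : IsInducedFree G P3uP2) {v : Fin 4 → V} {S : Finset (Fin 4)} {i j k : Fin 4}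
    (hi : i ∈ S) (hj : j ∉ S) (hk : k ∉ S) (hjk : G.Adj (v j) (v k))
    (hij : ¬ G.Adj (v i) (v j)) (hik : ¬ G.Adj (v i) (v k))
    {a y : V} (ha : a ∈ NS G v ∅) (hy : y ∈ NS G v S) : ¬ G.Adj a y := fun hay =>
  have hna (l : Fin 4) : ¬ G.Adj a (v l) := by simpa using ha.2 l
  (nonempty_P3uP2_embedding (ha.1 i) hay ((hy.2 i).2 hi) hjk (hna i) (hna j) (hna k)
    (by simpa [hj] using hy.2 j) (by simpa [hk] using hy.2 k) hij hik).elim hG.false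

theorem F4_A_anticomplete_N12_N34_general
    {V : Type*} (G : SimpleGraph V)
    (h1 : IsInducedFree G P3uP2)
    (v : Fin 4 → V) (h2k2 : Induces2K2 G v) :
    Anticomplete G (NS G v ∅) (NS G v {0, 1} ∪ NS G v {2, 3}) := by
  obtain ⟨-, h01, h23, h02, h03, h12, -⟩ := h2k2
  rintro a ha y (hy | hy)
  · exact not_adj_of_mem_NS_empty_of_mem_NS (i := 0) (j := 2) (k := 3) h1 (by decide)
      (by decide) (by decide) h23 h02 h03 ha hy
  · exact not_adj_of_mem_NS_empty_of_mem_NS (i := 2) (j := 0) (k := 1) h1 (by decide)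
      (by decide) (by decide) h01 (fun h => h02 h.symm) (fun h => h12 h.symm) ha hy

theorem F4_A_anticomplete_N12_N34
    {V : Type*} [Fintype V] (G : SimpleGraph V)
    (h1 : IsInducedFree G P3uP2)
    (v : Fin 4 → V) (h2k2 : Induces2K2 G v) :
    Anticomplete G (NS G v ∅) (NS G v {0, 1} ∪ NS G v {2, 3}) :=
  F4_A_anticomplete_N12_N34_general G h1 v h2k2
end

section
/- Let G be a (P3 ∪ P2, house)-free graph such that every proper induced subgraph G' of G satisfies χ(G') ≤ 2ω(G'), while χ(G) > 2ω(G), and suppose v1, v2, v3, v4 induce a 2K2 in G with edges v1v2 and v3v4. Let S ⊆ {1,2,3,4} with |S| = 3. If G[N_S] contains an induced subgraph isomorphic to P2 ∪ P1 (an edge plus an isolated vertex), then G[N_S] is a good subgraph of G. -/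
/-!
Write the induced `2K₂` as the edges `pq`, `kj` with `S = {p, q, k}`, so that `H = N_S` consists
of the common neighbours of `p, q, k` that miss `j`, and let the edge `xy` and the vertex `z` be
the induced `P₂ ∪ P₁` in `H`. By minimality `j` has a neighbour `t` missing `z`, since otherwise
`j` could take the colour of `z`. Excluding `P₃ ∪ P₂` and the house, `t` misses `k` and all of
`H`, so the edge `tj` shows that `G[H]` has no induced `P₃`: it is a disjoint union of cliques and
`χ(G[H]) = ω(G[H])`. A vertex other than `j` with no neighbour in `H` misses `k`, so the path
`x k z` forbids edges between two such vertices. A vertex with both a neighbour and a non-neighbour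
in `H` misses `p, q, k, j`, and these vertices induce a graph of maximum degree one: an induced
`P₃` among them goes with the edge `kj`, and a triangle produces a house. So both sets are
`2`-colourable, while `χ(G[H]) ≥ 2` because of the edge `xy`.
-/

open SimpleGraph

/-- The disjoint union of an edge and a single vertex. -/
def P2uP1 : SimpleGraph (Fin 3) := SimpleGraph.fromEdgeSet {s(0, 1)}

section

variable {V : Type*} {G : SimpleGraph V}

theorem IsInducedFree.not_P3uP2 (hF : IsInducedFree G P3uP2) (a b c d e : V) :
    ¬(G.Adj a b ∧ G.Adj b c ∧ ¬G.Adj a c ∧ a ≠ c ∧ G.Adj d e ∧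
      ¬G.Adj d a ∧ ¬G.Adj d b ∧ ¬G.Adj d c ∧ ¬G.Adj e a ∧ ¬G.Adj e b ∧ ¬G.Adj e c) := by
  rintro ⟨hab, hbc, hac, hne, hde, hda, hdb, hdc, hea, heb, hec⟩
  refine hF.false ⟨⟨![a, b, c, d, e], fun i i' h => ?_⟩, fun {i i'} => ?_⟩
  · fin_cases i <;> fin_cases i' <;> simp_all [G.adj_comm]
  · change G.Adj (![a, b, c, d, e] i) (![a, b, c, d, e] i') ↔ _
    fin_cases i <;> fin_cases i' <;> simp_all [P3uP2, G.adj_comm]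

/-- The 4-cycle `a b c d` with a roof `r` over the edge `ab`: in `house`, the complement of the
path `0 1 2 3 4`, this is the square `0 4 1 3` with roof `2`. -/
theorem IsInducedFree.not_house (hF : IsInducedFree G house) (a b c d r : V) :
    ¬(G.Adj a b ∧ G.Adj b c ∧ G.Adj c d ∧ G.Adj d a ∧ ¬G.Adj a c ∧ ¬G.Adj b d ∧
      G.Adj r a ∧ G.Adj r b ∧ ¬G.Adj r c ∧ ¬G.Adj r d) := by
  rintro ⟨hab, hbc, hcd, hda, hac, hbd, hra, hrb, hrc, hrd⟩
  refine hF.false ⟨⟨![a, c, r, d, b], fun i i' h => ?_⟩, fun {i i'} => ?_⟩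
  · fin_cases i <;> fin_cases i' <;> simp_all [G.adj_comm]
  · change G.Adj (![a, c, r, d, b] i) (![a, c, r, d, b] i') ↔ _
    fin_cases i <;> fin_cases i' <;> simp_all [house, pathGraph_adj, G.adj_comm]

theorem SimpleGraph.Colorable.of_neighborSet_subset {n : ℕ} {z j : V} (hzj : z ≠ j)
    (hN : G.neighborSet j ⊆ G.neighborSet z) (hc : (G.induce {j}ᶜ).Colorable n) :
    G.Colorable n := by
  classical
  obtain ⟨c⟩ := hc
  refine ⟨Coloring.mk (fun w => if hw : w = j then c ⟨z, hzj⟩ else c ⟨w, hw⟩) fun {a b} hab => ?_⟩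
  by_cases ha : a = j <;> by_cases hb : b = j
  · exact absurd (ha.trans hb.symm) hab.ne
  · subst ha
    rw [dif_pos rfl, dif_neg hb]
    exact c.valid (show (G.induce {a}ᶜ).Adj ⟨z, hzj⟩ ⟨b, hb⟩ from hN hab)
  · subst hb
    rw [dif_neg ha, dif_pos rfl]
    exact c.valid (show (G.induce {b}ᶜ).Adj ⟨a, ha⟩ ⟨z, hzj⟩ from (hN hab.symm).symm)
  · rw [dif_neg ha, dif_neg hb]
    exact c.valid (show (G.induce {j}ᶜ).Adj ⟨a, ha⟩ ⟨b, hb⟩ from hab)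

theorem exists_adj_not_adj_of_two_mul_cliqueNum_lt [Finite V]
    (hmin : ∀ s : Set V, s ≠ Set.univ →
      (G.induce s).chromaticNumber ≤ 2 * ((G.induce s).cliqueNum : ℕ∞))
    (hG : 2 * (G.cliqueNum : ℕ∞) < G.chromaticNumber) {z j : V} (hzj : z ≠ j) :
    ∃ t, G.Adj j t ∧ ¬G.Adj z t := by
  by_contra! hN
  have hcol : (G.induce {j}ᶜ).Colorable (2 * G.cliqueNum) := by
    rw [← chromaticNumber_le_iff_colorable]
    refine (hmin _ (by simp)).trans ?_
    push_cast
    gcongr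
    exact_mod_cast cliqueNum_induce_le _
  have := (hcol.of_neighborSet_subset hzj hN).chromaticNumber_le
  push_cast at this
  exact this.not_gt hG

theorem colorable_of_adj_trans {W : Type*} [Fintype W] {F : SimpleGraph W} [DecidableRel F.Adj]
    (htrans : ∀ a b c, F.Adj a b → F.Adj b c → a ≠ c → F.Adj a c) {n : ℕ}
    (hdeg : ∀ w, F.degree w < n) : F.Colorable n := by
  -- Colour `w` by the number of its neighbours preceding it: adjacent vertices have the same
  -- closed neighbourhood, so the later one counts strictly more.
  let ι := Fintype.equivFin W
  let below (w : W) : Finset W := {u ∈ F.neighborFinset w | ι u < ι w}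
  have below_lt : ∀ a b, F.Adj a b → ι a < ι b → (below a).card < (below b).card := by
    intro a b hab hlt
    refine Finset.card_lt_card ((Finset.ssubset_iff_of_subset fun u hu => ?_).2 ⟨a, ?_, ?_⟩)
    · simp only [below, Finset.mem_filter, mem_neighborFinset] at hu ⊢
      exact ⟨htrans b a u hab.symm hu.1 (ne_of_apply_ne ι (hu.2.trans hlt).ne'), hu.2.trans hlt⟩
    · simp [below, hab.symm, hlt]
    · simp [below]
  have below_card : ∀ w, (below w).card < n := fun w =>
    (Finset.card_filter_le _ _).trans_lt ((card_neighborFinset_eq_degree F w).trans_lt (hdeg w))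
  refine ⟨Coloring.mk (fun w => ⟨(below w).card, below_card w⟩) fun {a b} hab hc => ?_⟩
  have hc : (below a).card = (below b).card := congrArg Fin.val hc
  rcases lt_or_gt_of_ne (ι.injective.ne hab.ne) with hlt | hlt
  · exact (below_lt a b hab hlt).ne hc
  · exact (below_lt b a hab.symm hlt).ne' hc

theorem chromaticNumber_le_cliqueNum_of_adj_trans {W : Type*} [Finite W] {F : SimpleGraph W}
    (htrans : ∀ a b c, F.Adj a b → F.Adj b c → a ≠ c → F.Adj a c) :
    F.chromaticNumber ≤ F.cliqueNum := by
  classical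
  have := Fintype.ofFinite W
  refine (colorable_of_adj_trans htrans fun w => ?_).chromaticNumber_le
  have hcl : F.IsClique (insert w (F.neighborFinset w) : Finset W) := by
    rw [Finset.coe_insert, isClique_insert]
    refine ⟨fun a ha b hb hab => htrans a w b ?_ ?_ hab, fun b hb _ => ?_⟩ <;> simp_all [adj_comm]
  calc F.degree w < (insert w (F.neighborFinset w)).card := by
        rw [Finset.card_insert_of_notMem (by simp), card_neighborFinset_eq_degree]
        omega
    _ ≤ F.cliqueNum := hcl.card_le_cliqueNum

theorem colorable_two_of_subsingleton_neighborSet {W : Type*} [Finite W] {F : SimpleGraph W}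
    (hF : ∀ w, (F.neighborSet w).Subsingleton) : F.Colorable 2 := by
  classical
  have := Fintype.ofFinite W
  refine colorable_of_adj_trans (fun a b c hab hbc hac => (hac (hF b hab.symm hbc)).elim)
    fun w => ?_
  have : F.degree w ≤ 1 := by
    rw [← card_neighborFinset_eq_degree]
    exact Finset.card_le_one.2 fun a ha b hb => hF w (by simpa using ha) (by simpa using hb)
  omega

theorem colorable_two_of_forall_adj_mem {W : Type*} {F : SimpleGraph W} {s : Set W}
    (hs : s.Subsingleton) (hF : ∀ a b, F.Adj a b → a ∈ s ∨ b ∈ s) : F.Colorable 2 := by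
  classical
  refine ⟨Coloring.mk (fun w => if w ∈ s then (0 : Fin 2) else 1) fun {a b} hab hc => ?_⟩
  rcases hF a b hab with ha | hb
  · have hb : b ∉ s := fun hb => hab.ne (hs ha hb)
    simp [ha, hb] at hc
  · have ha : a ∉ s := fun ha => hab.ne (hs ha hb)
    simp [ha, hb] at hc

def IsClusterSet (G : SimpleGraph V) (H : Set V) : Prop :=
  ∀ ⦃a b c⦄, a ∈ H → b ∈ H → c ∈ H → G.Adj a b → G.Adj b c → a ≠ c → G.Adj a c

namespace IsClusterSet
variable {H : Set V}

theorem chromaticNumber_induce_le [Finite V] (hH : IsClusterSet G H) :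
    (G.induce H).chromaticNumber ≤ (G.induce H).cliqueNum :=
  chromaticNumber_le_cliqueNum_of_adj_trans fun a b c hab hbc hac =>
    hH a.2 b.2 c.2 hab hbc (Subtype.coe_ne_coe.2 hac)

theorem exists_ne_not_adj (hH : IsClusterSet G H) {x z : V} (hx : x ∈ H) (hz : z ∈ H)
    (hne : x ≠ z) (hxz : ¬G.Adj x z) {m : V} (hm : m ∈ H) :
    ∃ m' ∈ H, m ≠ m' ∧ ¬G.Adj m m' := by
  by_cases hmx : m = x
  · exact ⟨z, hz, hmx ▸ hne, hmx ▸ hxz⟩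
  by_cases hadj : G.Adj m x
  · exact ⟨z, hz, by rintro rfl; exact hxz hadj.symm,
      fun hmz => hxz (hH hx hm hz hadj.symm hmz hne)⟩
  · exact ⟨x, hx, hmx, hadj⟩

theorem adj_of_forall_adj_imp (hH : IsClusterSet G H)
    (hsep : ∀ m ∈ H, ∃ m' ∈ H, m ≠ m' ∧ ¬G.Adj m m') {u n m : V}
    (hu : ∀ a ∈ H, ∀ b ∈ H, a ≠ b → ¬G.Adj a b → G.Adj u a → G.Adj u b)
    (hn : n ∈ H) (hun : G.Adj u n) (hm : m ∈ H) : G.Adj u m := by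
  by_cases hnm : n = m
  · exact hnm ▸ hun
  by_cases hadj : G.Adj n m
  · obtain ⟨c, hc, hnc, hnc'⟩ := hsep n hn
    have hcm : ¬G.Adj c m := fun hcm => hnc' (hH hn hm hc hadj hcm.symm hnc)
    have hmc : c ≠ m := by rintro rfl; exact hnc' hadj
    exact hu c hc m hm hmc hcm (hu n hn c hc hnc hnc' hun)
  · exact hu n hn m hm hnm hadj hun

end IsClusterSet

def anticompleteSet (G : SimpleGraph V) (H : Set V) : Set V :=
  {u | u ∉ H ∧ ∀ h ∈ H, ¬G.Adj u h}

def mixedSet (G : SimpleGraph V) (H : Set V) : Set V :=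
  {u | u ∉ H ∧ (∃ h ∈ H, G.Adj u h) ∧ ∃ h ∈ H, ¬G.Adj u h}

/-- `H` is the set `N_S` of the paper for the induced `2K₂` with edges `pq`, `kj` and
`S = {p, q, k}`. -/
structure IsNThree (G : SimpleGraph V) (p q k j : V) (H : Set V) : Prop where
  adj_pq : G.Adj p q
  adj_kj : G.Adj k j
  not_adj_pk : ¬G.Adj p k
  not_adj_pj : ¬G.Adj p j
  not_adj_qk : ¬G.Adj q k
  not_adj_qj : ¬G.Adj q j
  mem_iff : ∀ u, u ∈ H ↔ G.Adj u p ∧ G.Adj u q ∧ G.Adj u k ∧ ¬G.Adj u j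

namespace IsNThree
variable {p q k j : V} {H : Set V}

theorem symm (h : IsNThree G p q k j H) : IsNThree G q p k j H :=
  ⟨h.adj_pq.symm, h.adj_kj, h.not_adj_qk, h.not_adj_qj, h.not_adj_pk, h.not_adj_pj,
    fun u => (h.mem_iff u).trans (by tauto)⟩

theorem adj_p (h : IsNThree G p q k j H) {u : V} (hu : u ∈ H) : G.Adj u p :=
  ((h.mem_iff u).1 hu).1

theorem adj_k (h : IsNThree G p q k j H) {u : V} (hu : u ∈ H) : G.Adj u k :=
  ((h.mem_iff u).1 hu).2.2.1

theorem not_adj_j (h : IsNThree G p q k j H) {u : V} (hu : u ∈ H) : ¬G.Adj u j :=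
  ((h.mem_iff u).1 hu).2.2.2

theorem ne_j (h : IsNThree G p q k j H) {u : V} (hu : u ∈ H) : u ≠ j := by
  rintro rfl
  exact h.not_adj_pj (h.adj_p hu).symm

theorem not_adj_p_of_adj_k (h : IsNThree G p q k j H) (hHouse : IsInducedFree G house)
    {u m : V} (hu : u ∉ H) (hm : m ∈ H) (hum : ¬G.Adj u m) (huk : G.Adj u k) :
    ¬G.Adj u p := by
  have ⟨hpq, hkj, hpk, hpj, hqk, hqj, hH⟩ := h
  intro hup
  by_cases huj : G.Adj u j
  · exact hHouse.not_house k u p m j (by grind [Adj.symm])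
  · exact hHouse.not_house m p u k q (by grind [Adj.symm])

theorem not_adj_k_of_not_adj (h : IsNThree G p q k j H) (hP : IsInducedFree G P3uP2)
    (hHouse : IsInducedFree G house) {u m m' : V} (hu : u ∉ H) (huj : u ≠ j)
    (hm : m ∈ H) (hm' : m' ∈ H) (hne : m ≠ m') (hmm' : ¬G.Adj m m') (hum : ¬G.Adj u m) :
    ¬G.Adj u k := by
  have ⟨hpq, hkj, hpk, hpj, hqk, hqj, hH⟩ := h
  intro huk
  have hup := h.not_adj_p_of_adj_k hHouse hu hm hum huk
  have huq := h.symm.not_adj_p_of_adj_k hHouse hu hm hum huk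
  have huj' : G.Adj u j := by
    by_contra huj'
    exact hP.not_P3uP2 j k u p q (by grind [Adj.symm])
  by_cases hum' : G.Adj u m'
  · exact hHouse.not_house m' k m p u (by grind [Adj.symm])
  · exact hP.not_P3uP2 m p m' u j (by grind [Adj.symm])

theorem adj_p_or_adj_q (h : IsNThree G p q k j H) (hP : IsInducedFree G P3uP2) {u : V}
    (huj : G.Adj u j) (huk : ¬G.Adj u k) (huk' : u ≠ k) : G.Adj u p ∨ G.Adj u q := by
  have ⟨hpq, hkj, hpk, hpj, hqk, hqj, hH⟩ := h
  by_contra! hupq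
  exact hP.not_P3uP2 k j u p q (by grind [Adj.symm])

theorem not_adj_of_adj_j (h : IsNThree G p q k j H) (hP : IsInducedFree G P3uP2)
    (hHouse : IsInducedFree G house) {u m : V} (huj : G.Adj u j) (huk : ¬G.Adj u k)
    (huk' : u ≠ k) (hm : m ∈ H) : ¬G.Adj u m := by
  have ⟨hpq, hkj, hpk, hpj, hqk, hqj, hH⟩ := h
  intro hum
  rcases h.adj_p_or_adj_q hP huj huk huk' with hup | huq
  · exact hHouse.not_house u m k j p (by grind [Adj.symm])
  · exact hHouse.not_house u m k j q (by grind [Adj.symm])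

theorem isClusterSet (h : IsNThree G p q k j H) (hP : IsInducedFree G P3uP2) {t : V}
    (htj : G.Adj t j) (htH : ∀ a ∈ H, ¬G.Adj t a) : IsClusterSet G H := by
  have ⟨hpq, hkj, hpk, hpj, hqk, hqj, hH⟩ := h
  intro a b c ha hb hc hab hbc hac
  by_contra hac'
  exact hP.not_P3uP2 a b c t j (by grind [Adj.symm])

theorem not_adj_p_of_mem_mixedSet (h : IsNThree G p q k j H) (hHouse : IsInducedFree G house)
    (hcl : IsClusterSet G H) (hsep : ∀ m ∈ H, ∃ m' ∈ H, m ≠ m' ∧ ¬G.Adj m m') {u : V}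
    (hu : u ∈ mixedSet G H) (huk : ¬G.Adj u k) : ¬G.Adj u p := by
  have ⟨hpq, hkj, hpk, hpj, hqk, hqj, hH⟩ := h
  obtain ⟨-, ⟨n, hn, hun⟩, m, hm, hum⟩ := hu
  intro hup
  refine hum (hcl.adj_of_forall_adj_imp hsep (fun a ha b hb hab hab' hua => ?_) hn hun hm)
  by_contra hub
  exact hHouse.not_house a p b k u (by grind [Adj.symm])

theorem not_adj_of_mem_mixedSet (h : IsNThree G p q k j H) (hP : IsInducedFree G P3uP2)
    (hHouse : IsInducedFree G house) (hcl : IsClusterSet G H)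
    (hsep : ∀ m ∈ H, ∃ m' ∈ H, m ≠ m' ∧ ¬G.Adj m m') {u : V} (hu : u ∈ mixedSet G H) :
    ¬G.Adj u p ∧ ¬G.Adj u q ∧ ¬G.Adj u k ∧ ¬G.Adj u j := by
  have ⟨huH, ⟨n, hn, hun⟩, m, hm, hum⟩ := hu
  have huj : u ≠ j := by
    rintro rfl
    exact h.not_adj_j hn hun.symm
  have huk' : u ≠ k := by
    rintro rfl
    exact hum (h.adj_k hm).symm
  obtain ⟨m', hm', hne, hmm'⟩ := hsep m hm
  have huk := h.not_adj_k_of_not_adj hP hHouse huH huj hm hm' hne hmm' hum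
  exact ⟨h.not_adj_p_of_mem_mixedSet hHouse hcl hsep hu huk,
    h.symm.not_adj_p_of_mem_mixedSet hHouse hcl hsep hu huk, huk,
    fun huj => h.not_adj_of_adj_j hP hHouse huj huk huk' hn hun⟩

theorem adj_of_adj_of_adj (h : IsNThree G p q k j H) (hP : IsInducedFree G P3uP2)
    (hHouse : IsInducedFree G house) {t u n m : V} (htj : G.Adj t j)
    (htH : ∀ a ∈ H, ¬G.Adj t a) (htpq : G.Adj t p ∨ G.Adj t q) (hup : ¬G.Adj u p)
    (huq : ¬G.Adj u q) (huj : ¬G.Adj u j) (hn : n ∈ H) (hun : G.Adj u n) (hm : m ∈ H)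
    (hnm : G.Adj n m) : G.Adj u m := by
  have ⟨hpq, hkj, hpk, hpj, hqk, hqj, hH⟩ := h
  have htn := htH n hn
  have htm := htH m hm
  by_contra hum
  by_cases htu : G.Adj t u
  · rcases htpq with htp | htq
    · exact hHouse.not_house n p t u m (by grind [Adj.symm])
    · exact hHouse.not_house n q t u m (by grind [Adj.symm])
  · exact hP.not_P3uP2 u n m t j (by grind [Adj.symm])

theorem adj_or_adj_of_adj (h : IsNThree G p q k j H) (hP : IsInducedFree G P3uP2)
    {a b c : V} (hab : G.Adj a b) (hap : ¬G.Adj a p) (hbp : ¬G.Adj b p) (hak : ¬G.Adj a k)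
    (hbk : ¬G.Adj b k) (hc : c ∈ H) : G.Adj a c ∨ G.Adj b c := by
  have ⟨hpq, hkj, hpk, hpj, hqk, hqj, hH⟩ := h
  by_contra! hac
  exact hP.not_P3uP2 p c k a b (by grind [Adj.symm])

theorem eq_of_adj_of_adj_of_mem_mixedSet (h : IsNThree G p q k j H)
    (hP : IsInducedFree G P3uP2) (hHouse : IsInducedFree G house) (hcl : IsClusterSet G H)
    (hsep : ∀ m ∈ H, ∃ m' ∈ H, m ≠ m' ∧ ¬G.Adj m m') {t : V} (htj : G.Adj t j)
    (htH : ∀ a ∈ H, ¬G.Adj t a) (htpq : G.Adj t p ∨ G.Adj t q) {u v w : V}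
    (hu : u ∈ mixedSet G H) (hv : v ∈ mixedSet G H) (hw : w ∈ mixedSet G H)
    (huv : G.Adj u v) (huw : G.Adj u w) : v = w := by
  obtain ⟨hup, huq, huk, huj⟩ := h.not_adj_of_mem_mixedSet hP hHouse hcl hsep hu
  obtain ⟨hvp, hvq, hvk, hvj⟩ := h.not_adj_of_mem_mixedSet hP hHouse hcl hsep hv
  obtain ⟨hwp, hwq, hwk, hwj⟩ := h.not_adj_of_mem_mixedSet hP hHouse hcl hsep hw
  by_contra hvw
  by_cases hvw' : G.Adj v w
  · -- `u` sees the vertices `mv`, `mw` of `H` missed by `v`, `w`; they lie in different cliques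
    -- of `G[H]`, so `v` is a roof over the square `u mw p mv`.
    obtain ⟨mv, hmv, hvmv⟩ := hv.2.2
    obtain ⟨mw, hmw, hwmw⟩ := hw.2.2
    have humv := (h.adj_or_adj_of_adj hP huv hup hvp huk hvk hmv).resolve_right hvmv
    have humw := (h.adj_or_adj_of_adj hP huw hup hwp huk hwk hmw).resolve_right hwmw
    have hvmw := (h.adj_or_adj_of_adj hP hvw' hvp hwp hvk hwk hmw).resolve_right hwmw
    have hmwv : ¬G.Adj mw mv := fun hadj =>
      hvmv (h.adj_of_adj_of_adj hP hHouse htj htH htpq hvp hvq hvj hmw hvmw hmv hadj)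
    exact hHouse.not_house u mw p mv v ⟨humw, h.adj_p hmw, (h.adj_p hmv).symm, humv.symm, hup,
      hmwv, huv.symm, hvmw, hvp, hvmv⟩
  · exact hP.not_P3uP2 v u w k j (by grind [Adj.symm, h.adj_kj])

theorem eq_or_eq_of_adj_of_mem_anticompleteSet (h : IsNThree G p q k j H)
    (hP : IsInducedFree G P3uP2) (hHouse : IsInducedFree G house) {x z : V} (hx : x ∈ H)
    (hz : z ∈ H) (hne : x ≠ z) (hxz : ¬G.Adj x z) {u w : V} (hu : u ∈ anticompleteSet G H)
    (hw : w ∈ anticompleteSet G H) (huw : G.Adj u w) : u = j ∨ w = j := by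
  have ⟨hpq, hkj, hpk, hpj, hqk, hqj, hH⟩ := h
  obtain ⟨huH, hu⟩ := hu
  obtain ⟨hwH, hw⟩ := hw
  by_contra! hj
  have huk := h.not_adj_k_of_not_adj hP hHouse huH hj.1 hx hz hne hxz (hu x hx)
  have hwk := h.not_adj_k_of_not_adj hP hHouse hwH hj.2 hx hz hne hxz (hw x hx)
  exact hP.not_P3uP2 x k z u w (by grind [Adj.symm])

theorem isGoodSubgraph [Finite V] (h : IsNThree G p q k j H) (hP : IsInducedFree G P3uP2)
    (hHouse : IsInducedFree G house) {x y z t : V} (hx : x ∈ H) (hy : y ∈ H) (hz : z ∈ H)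
    (hxy : G.Adj x y) (hne : x ≠ z) (hxz : ¬G.Adj x z) (htj : G.Adj t j)
    (htz : ¬G.Adj t z) : IsGoodSubgraph G H := by
  have ht_notMem : t ∉ H := fun ht => h.not_adj_j ht htj
  have htk' : t ≠ k := by
    rintro rfl
    exact htz (h.adj_k hz).symm
  have htk := h.not_adj_k_of_not_adj hP hHouse ht_notMem htj.ne hz hx hne.symm (hxz ·.symm) htz
  have htH : ∀ a ∈ H, ¬G.Adj t a := fun a ha => h.not_adj_of_adj_j hP hHouse htj htk htk' ha
  have htpq := h.adj_p_or_adj_q hP htj htk htk'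
  have hcl := h.isClusterSet hP htj htH
  have hsep : ∀ m ∈ H, ∃ m' ∈ H, m ≠ m' ∧ ¬G.Adj m m' := fun m hm =>
    hcl.exists_ne_not_adj hx hz hne hxz hm
  have two_le : 2 ≤ (G.induce H).chromaticNumber :=
    two_le_chromaticNumber_of_adj (show (G.induce H).Adj ⟨x, hx⟩ ⟨y, hy⟩ from hxy)
  refine ⟨hcl.chromaticNumber_induce_le, le_trans ?_ two_le, le_trans ?_ two_le⟩
  · have hI : (G.induce (anticompleteSet G H)).Colorable 2 :=
      colorable_two_of_forall_adj_mem (s := {u | (u : V) = j})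
        (fun a ha b hb => Subtype.ext (ha.trans hb.symm)) fun a b hab =>
        h.eq_or_eq_of_adj_of_mem_anticompleteSet hP hHouse hx hz hne hxz a.2 b.2 hab
    exact_mod_cast hI.chromaticNumber_le
  · have hT : (G.induce (mixedSet G H)).Colorable 2 :=
      colorable_two_of_subsingleton_neighborSet fun u a ha b hb => Subtype.ext
        (h.eq_of_adj_of_adj_of_mem_mixedSet hP hHouse hcl hsep htj htH htpq u.2 a.2 b.2 ha hb)
    exact_mod_cast hT.chromaticNumber_le

end IsNThree

theorem exists_isNThree_NS {v : Fin 4 → V} (hv : Induces2K2 G v) {S : Finset (Fin 4)}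
    (hS : S.card = 3) : ∃ p q k j, IsNThree G p q k j (NS G v S) := by
  obtain ⟨i, hi⟩ := Finset.card_eq_one.1 (show Sᶜ.card = 1 by rw [Finset.card_compl, hS]; rfl)
  rw [← compl_compl S, hi]
  obtain ⟨-, h01, h23, h02, h03, h12, h13⟩ := hv
  fin_cases i <;> [
    refine ⟨v 2, v 3, v 1, v 0, h23, h01.symm, (h12 ·.symm), (h02 ·.symm), (h13 ·.symm),
      (h03 ·.symm), fun u => ?_⟩;
    refine ⟨v 2, v 3, v 0, v 1, h23, h01, (h02 ·.symm), (h12 ·.symm), (h03 ·.symm),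
      (h13 ·.symm), fun u => ?_⟩;
    refine ⟨v 0, v 1, v 3, v 2, h01, h23.symm, h03, h02, h13, h12, fun u => ?_⟩;
    refine ⟨v 0, v 1, v 2, v 3, h01, h23, h02, h03, h12, h13, fun u => ?_⟩]
  all_goals
    simp only [NS, Set.mem_ofPred_eq, Fin.forall_fin_succ, Fin.isValue, Finset.mem_compl,
      Finset.mem_singleton]
    refine ⟨fun ⟨_, h⟩ => by simp_all, fun h => ⟨?_, by simp_all⟩⟩
    refine ⟨?_, ?_, ?_, ?_, fun l => l.elim0⟩ <;> rintro rfl <;> grind [Adj.symm]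

theorem exists_adj_not_adj_of_P2uP1 {H : Set V} (hf : Nonempty (P2uP1 ↪g G.induce H)) :
    ∃ x ∈ H, ∃ y ∈ H, ∃ z ∈ H, G.Adj x y ∧ x ≠ z ∧ ¬G.Adj x z := by
  obtain ⟨f⟩ := hf
  refine ⟨f 0, (f 0).2, f 1, (f 1).2, f 2, (f 2).2, f.map_adj_iff.2 (by simp [P2uP1]),
    fun h => ?_, fun h => ?_⟩
  · exact (by decide : (0 : Fin 3) ≠ 2) (f.injective (Subtype.ext h))
  · exact (by simp [P2uP1] : ¬P2uP1.Adj 0 2) (f.map_adj_iff.1 h)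

end

theorem F5_good_subgraph_of_P2uP1_in_NS_card_three
    {V : Type*} [Fintype V] (G : SimpleGraph V)
    (h1 : IsInducedFree G P3uP2) (h2 : IsInducedFree G house)
    (hmin : ∀ s : Set V, s ≠ Set.univ →
      (G.induce s).chromaticNumber ≤ 2 * ((G.induce s).cliqueNum : ℕ∞))
    (hG : 2 * (G.cliqueNum : ℕ∞) < G.chromaticNumber)
    (v : Fin 4 → V) (h2k2 : Induces2K2 G v)
    (S : Finset (Fin 4)) (hS : S.card = 3)
    (hP2P1 : Nonempty (P2uP1 ↪g G.induce (NS G v S))) :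
    IsGoodSubgraph G (NS G v S) := by
  obtain ⟨p, q, k, j, hN⟩ := exists_isNThree_NS h2k2 hS
  obtain ⟨x, hx, y, hy, z, hz, hxy, hne, hxz⟩ := exists_adj_not_adj_of_P2uP1 hP2P1
  obtain ⟨t, hjt, hzt⟩ := exists_adj_not_adj_of_two_mul_cliqueNum_lt hmin hG (hN.ne_j hz)
  exact hN.isGoodSubgraph h1 h2 hx hy hz hxy hne hxz hjt.symm (hzt ·.symm)
end

section
/- Let G be a (P3 ∪ P2, house)-free graph such that every proper induced subgraph G' of G satisfies χ(G') ≤ 2ω(G'), while χ(G) > 2ω(G), and suppose v1, v2, v3, v4 induce a 2K2 in G with edges v1v2 and v3v4. Let A be the set of vertices outside {v1,v2,v3,v4} with no neighbor in {v1,v2,v3,v4}. If N_{{1,2,3,4}} is a clique and A ≠ ∅, then A is complete to N_{{1,2,3,4}}: every vertex of A is adjacent to every vertex of N_{{1,2,3,4}}. -/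
open SimpleGraph

/-! If `a ∈ A` and `n ∈ N_{1234}` were non-adjacent, every neighbour `b` of `a` would be a
neighbour of `n`. Indeed, if `b` misses `n`, then by `P₃ ∪ P₂`-freeness `b` sees both edges of the
`2K₂` (otherwise `a b vᵢ` plus the other edge, or `v₁ n v₃` plus `a b`, is an induced `P₃ ∪ P₂`),
so by house-freeness `b` sees all four `vᵢ`; then `b ∈ N_{1234}`, a clique containing `n`.
Sending `a` to `n` is then a homomorphism from `G` onto `G - a`, whence
`χ(G) ≤ χ(G - a) ≤ 2ω(G - a) ≤ 2ω(G)`, contradicting `χ(G) > 2ω(G)`. -/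

theorem P3uP2_eq_of_twins : ∀ i j : Fin 5, ¬ P3uP2.Adj i j →
    (∀ k, P3uP2.Adj i k ↔ P3uP2.Adj j k) → i = j ∨ i = 0 ∧ j = 2 ∨ i = 2 ∧ j = 0 := by
  unfold P3uP2; decide

theorem house_eq_of_twins : ∀ i j : Fin 5, ¬ house.Adj i j →
    (∀ k, house.Adj i k ↔ house.Adj j k) → i = j := by
  simp only [house, compl_adj, pathGraph_adj]; decide

section

variable {V : Type*} {G : SimpleGraph V}

section InducedFree

/-- A map preserving and reflecting adjacency can only identify false twins of `H`. -/
theorem IsInducedFree.false_of_adj_iff {W : Type*} {H : SimpleGraph W} (h : IsInducedFree G H)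
    (f : W → V) (hf : ∀ i j, G.Adj (f i) (f j) ↔ H.Adj i j)
    (htwins : ∀ i j, f i = f j → ¬ H.Adj i j → (∀ k, H.Adj i k ↔ H.Adj j k) → i = j) :
    False := by
  refine h.false ⟨⟨f, fun i j hij => htwins i j hij ?_ fun k => ?_⟩, hf _ _⟩
  · exact fun hadj => G.loopless.irrefl (f i) (hij ▸ (hf i j).2 hadj)
  · rw [← hf, ← hf, hij]

theorem IsInducedFree.false_of_P3uP2 (h : IsInducedFree G P3uP2) {x y z p q : V} (hne : x ≠ z)
    (hxy : G.Adj x y) (hyz : G.Adj y z) (hpq : G.Adj p q) (hxz : ¬ G.Adj x z)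
    (hxp : ¬ G.Adj x p) (hxq : ¬ G.Adj x q) (hyp : ¬ G.Adj y p) (hyq : ¬ G.Adj y q)
    (hzp : ¬ G.Adj z p) (hzq : ¬ G.Adj z q) : False := by
  refine h.false_of_adj_iff ![x, y, z, p, q] (fun i j => ?_) fun i j hij htw₁ htw₂ => ?_
  · fin_cases i <;> fin_cases j <;> simp [P3uP2, G.adj_comm, *]
  · rcases P3uP2_eq_of_twins i j htw₁ htw₂ with rfl | ⟨rfl, rfl⟩ | ⟨rfl, rfl⟩
    exacts [rfl, absurd hij hne, absurd hij.symm hne]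

theorem IsInducedFree.false_of_house_s17 (h : IsInducedFree G house) {x y z p q : V}
    (hxy : ¬ G.Adj x y) (hyz : ¬ G.Adj y z) (hzp : ¬ G.Adj z p) (hpq : ¬ G.Adj p q)
    (hxz : G.Adj x z) (hxp : G.Adj x p) (hxq : G.Adj x q) (hyp : G.Adj y p) (hyq : G.Adj y q)
    (hzq : G.Adj z q) : False := by
  refine h.false_of_adj_iff ![x, y, z, p, q] (fun i j => ?_) fun i j _ => house_eq_of_twins i j
  fin_cases i <;> fin_cases j <;> simp [house, pathGraph_adj, G.adj_comm, *]

end InducedFree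

section Dominated

variable {a n : V}

def SimpleGraph.retractOfNeighborSetSubset [DecidableEq V] (hna : n ≠ a)
    (hdom : G.neighborSet a ⊆ G.neighborSet n) : G →g G.induce {a}ᶜ where
  toFun x := ⟨if x = a then n else x, by split_ifs with hx <;> assumption⟩
  map_rel' {x y} hxy := by
    change G.Adj (if x = a then n else x) (if y = a then n else y)
    by_cases hx : x = a <;> by_cases hy : y = a
    · exact absurd (hx.trans hy.symm) hxy.ne
    · simpa [hx, hy] using hdom (hx ▸ hxy : G.Adj a y)
    · simpa [hx, hy] using (hdom (hy ▸ hxy.symm : G.Adj a x)).symm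
    · simpa [hx, hy] using hxy

theorem SimpleGraph.chromaticNumber_le_induce_compl_of_neighborSet_subset (hna : n ≠ a)
    (hdom : G.neighborSet a ⊆ G.neighborSet n) :
    G.chromaticNumber ≤ (G.induce {a}ᶜ).chromaticNumber := by
  classical exact chromaticNumber_mono_of_hom (G.retractOfNeighborSetSubset hna hdom)

theorem SimpleGraph.not_neighborSet_subset_of_critical [Finite V]
    (hmin : ∀ s : Set V, s ≠ Set.univ →
      (G.induce s).chromaticNumber ≤ 2 * ((G.induce s).cliqueNum : ℕ∞))
    (hG : 2 * (G.cliqueNum : ℕ∞) < G.chromaticNumber) (hna : n ≠ a) :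
    ¬ G.neighborSet a ⊆ G.neighborSet n := fun hdom => by
  refine lt_irrefl G.chromaticNumber ?_
  calc G.chromaticNumber ≤ (G.induce {a}ᶜ).chromaticNumber :=
        G.chromaticNumber_le_induce_compl_of_neighborSet_subset hna hdom
    _ ≤ 2 * ((G.induce {a}ᶜ).cliqueNum : ℕ∞) := hmin _ (by simp)
    _ ≤ 2 * (G.cliqueNum : ℕ∞) := by gcongr; exact_mod_cast G.cliqueNum_induce_le _
    _ < G.chromaticNumber := hG

end Dominated

section TwoK2

variable {v : Fin 4 → V} {a b n : V}

theorem mem_NS_empty : a ∈ NS G v ∅ ↔ (∀ i, a ≠ v i) ∧ ∀ i, ¬ G.Adj a (v i) := by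
  simp [NS]

theorem mem_NS_univ : a ∈ NS G v {0, 1, 2, 3} ↔ (∀ i, a ≠ v i) ∧ ∀ i, G.Adj a (v i) := by
  have hmem : ∀ i : Fin 4, i ∈ ({0, 1, 2, 3} : Finset (Fin 4)) := by decide
  simp [NS, hmem]

namespace Induces2K2

theorem comp_swap_left (hv : Induces2K2 G v) : Induces2K2 G (v ∘ ![1, 0, 2, 3]) :=
  let ⟨hinj, h01, h23, h02, h03, h12, h13⟩ := hv
  ⟨hinj.comp (by decide), h01.symm, h23, h12, h13, h02, h03⟩

theorem comp_swap_right (hv : Induces2K2 G v) : Induces2K2 G (v ∘ ![0, 1, 3, 2]) :=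
  let ⟨hinj, h01, h23, h02, h03, h12, h13⟩ := hv
  ⟨hinj.comp (by decide), h01, h23.symm, h03, h02, h13, h12⟩

theorem comp_swap_pairs (hv : Induces2K2 G v) : Induces2K2 G (v ∘ ![2, 3, 0, 1]) :=
  let ⟨hinj, h01, h23, h02, h03, h12, h13⟩ := hv
  ⟨hinj.comp (by decide), h23, h01, fun h => h02 h.symm, fun h => h12 h.symm,
    fun h => h03 h.symm, fun h => h13 h.symm⟩

theorem adj_right_of_adj_zero (hP3uP2 : IsInducedFree G P3uP2) (hv : Induces2K2 G v)
    (hav : ∀ i, a ≠ v i) (ha : ∀ i, ¬ G.Adj a (v i)) (hab : G.Adj a b) (hb0 : G.Adj b (v 0)) :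
    G.Adj b (v 2) ∨ G.Adj b (v 3) := by
  obtain ⟨-, -, h23, h02, h03, -, -⟩ := hv
  by_contra! hb
  exact hP3uP2.false_of_P3uP2 (hav 0) hab hb0 h23 (ha 0) (ha 2) (ha 3) hb.1 hb.2 h02 h03

theorem adj_right_of_adj_left (hP3uP2 : IsInducedFree G P3uP2) (hv : Induces2K2 G v)
    (hav : ∀ i, a ≠ v i) (ha : ∀ i, ¬ G.Adj a (v i)) (hab : G.Adj a b) :
    G.Adj b (v 0) ∨ G.Adj b (v 1) → G.Adj b (v 2) ∨ G.Adj b (v 3)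
  | .inl hb0 => adj_right_of_adj_zero hP3uP2 hv hav ha hab hb0
  | .inr hb1 => (adj_right_of_adj_zero hP3uP2 hv.comp_swap_left (fun _ => hav _) (fun _ => ha _)
      hab hb1 :)

theorem adj_left_iff_adj_right (hP3uP2 : IsInducedFree G P3uP2) (hv : Induces2K2 G v)
    (hav : ∀ i, a ≠ v i) (ha : ∀ i, ¬ G.Adj a (v i)) (hab : G.Adj a b) :
    G.Adj b (v 0) ∨ G.Adj b (v 1) ↔ G.Adj b (v 2) ∨ G.Adj b (v 3) :=
  ⟨adj_right_of_adj_left hP3uP2 hv hav ha hab,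
    adj_right_of_adj_left hP3uP2 hv.comp_swap_pairs (fun _ => hav _) (fun _ => ha _) hab⟩

theorem exists_adj (hP3uP2 : IsInducedFree G P3uP2) (hv : Induces2K2 G v)
    (hn : ∀ i, G.Adj n (v i)) (ha : ∀ i, ¬ G.Adj a (v i)) (hab : G.Adj a b) (han : ¬ G.Adj a n)
    (hbn : ¬ G.Adj b n) : ∃ i, G.Adj b (v i) := by
  obtain ⟨hinj, -, -, h02, -, -, -⟩ := hv
  by_contra! hb
  exact hP3uP2.false_of_P3uP2 (hinj.ne (by decide : (0 : Fin 4) ≠ 2)) (hn 0).symm (hn 2) hab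
    h02 (fun h => ha 0 h.symm) (fun h => hb 0 h.symm) (fun h => han h.symm)
    (fun h => hbn h.symm) (fun h => ha 2 h.symm) (fun h => hb 2 h.symm)

theorem adj_one_of_adj_zero_of_adj_two (hhouse : IsInducedFree G house) (hv : Induces2K2 G v)
    (hn : ∀ i, G.Adj n (v i)) (hbn : ¬ G.Adj b n) (hb0 : G.Adj b (v 0)) (hb2 : G.Adj b (v 2)) :
    G.Adj b (v 1) := by
  obtain ⟨-, h01, -, h02, -, h12, -⟩ := hv
  by_contra hb1
  exact hhouse.false_of_house_s17 h02 (fun h => h12 h.symm) (fun h => hb1 h.symm) hbn h01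
    hb0.symm (hn 0).symm hb2.symm (hn 2).symm (hn 1).symm

theorem adj_one_of_adj_zero (hhouse : IsInducedFree G house) (hv : Induces2K2 G v)
    (hn : ∀ i, G.Adj n (v i)) (hbn : ¬ G.Adj b n) (hb0 : G.Adj b (v 0))
    (hr : G.Adj b (v 2) ∨ G.Adj b (v 3)) : G.Adj b (v 1) :=
  hr.elim (adj_one_of_adj_zero_of_adj_two hhouse hv hn hbn hb0)
    (adj_one_of_adj_zero_of_adj_two hhouse hv.comp_swap_right (fun _ => hn _) hbn hb0)

theorem adj_zero_and_adj_one (hhouse : IsInducedFree G house) (hv : Induces2K2 G v)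
    (hn : ∀ i, G.Adj n (v i)) (hbn : ¬ G.Adj b n) (hl : G.Adj b (v 0) ∨ G.Adj b (v 1))
    (hr : G.Adj b (v 2) ∨ G.Adj b (v 3)) : G.Adj b (v 0) ∧ G.Adj b (v 1) := by
  rcases hl with hb0 | hb1
  · exact ⟨hb0, adj_one_of_adj_zero hhouse hv hn hbn hb0 hr⟩
  · exact ⟨adj_one_of_adj_zero hhouse hv.comp_swap_left (fun _ => hn _) hbn hb1 hr, hb1⟩

theorem forall_adj_of_adj_left_of_adj_right (hhouse : IsInducedFree G house)
    (hv : Induces2K2 G v) (hn : ∀ i, G.Adj n (v i)) (hbn : ¬ G.Adj b n)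
    (hl : G.Adj b (v 0) ∨ G.Adj b (v 1)) (hr : G.Adj b (v 2) ∨ G.Adj b (v 3)) :
    ∀ i, G.Adj b (v i) := by
  obtain ⟨hb0, hb1⟩ := adj_zero_and_adj_one hhouse hv hn hbn hl hr
  obtain ⟨hb2, hb3⟩ := adj_zero_and_adj_one hhouse hv.comp_swap_pairs (fun _ => hn _) hbn hr hl
  intro i
  fin_cases i
  exacts [hb0, hb1, hb2, hb3]

theorem neighborSet_subset_of_not_adj (hP3uP2 : IsInducedFree G P3uP2) (hhouse : IsInducedFree G house)
    (hv : Induces2K2 G v) (hcl : G.IsClique (NS G v {0, 1, 2, 3})) (ha : a ∈ NS G v ∅)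
    (hn : n ∈ NS G v {0, 1, 2, 3}) (han : ¬ G.Adj a n) :
    G.neighborSet a ⊆ G.neighborSet n := by
  rw [mem_NS_empty] at ha
  intro b (hab : G.Adj a b)
  by_contra hnb
  have hbn : ¬ G.Adj b n := fun h => hnb h.symm
  have hbv : ∀ i, b ≠ v i := fun i h => ha.2 i (h ▸ hab)
  have hlr := adj_left_iff_adj_right hP3uP2 hv ha.1 ha.2 hab
  have hl : G.Adj b (v 0) ∨ G.Adj b (v 1) := by
    obtain ⟨i, hi⟩ := exists_adj hP3uP2 hv (mem_NS_univ.1 hn).2 ha.2 hab han hbn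
    fin_cases i
    exacts [.inl hi, .inr hi, hlr.2 (.inl hi), hlr.2 (.inr hi)]
  have hb : b ∈ NS G v {0, 1, 2, 3} := mem_NS_univ.2
    ⟨hbv, forall_adj_of_adj_left_of_adj_right hhouse hv (mem_NS_univ.1 hn).2 hbn hl (hlr.1 hl)⟩
  exact hnb (hcl hn hb fun h => han (h ▸ hab))

end Induces2K2

end TwoK2

end

theorem A_complete_to_N1234_general
    {V : Type*} [Fintype V] (G : SimpleGraph V)
    (h1 : IsInducedFree G P3uP2) (h2 : IsInducedFree G house)
    (hmin : ∀ s : Set V, s ≠ Set.univ →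
      (G.induce s).chromaticNumber ≤ 2 * ((G.induce s).cliqueNum : ℕ∞))
    (hG : 2 * (G.cliqueNum : ℕ∞) < G.chromaticNumber)
    (v : Fin 4 → V) (h2k2 : Induces2K2 G v)
    (hcl : G.IsClique (NS G v {0, 1, 2, 3})) :
    CompleteTo G (NS G v ∅) (NS G v {0, 1, 2, 3}) := by
  intro a ha n hn
  by_contra han
  have hna : n ≠ a := fun h => (mem_NS_empty.1 ha).2 0 (h ▸ (mem_NS_univ.1 hn).2 0)
  exact G.not_neighborSet_subset_of_critical hmin hG hna
    (h2k2.neighborSet_subset_of_not_adj h1 h2 hcl ha hn han)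

theorem A_complete_to_N1234
    {V : Type*} [Fintype V] (G : SimpleGraph V)
    (h1 : IsInducedFree G P3uP2) (h2 : IsInducedFree G house)
    (hmin : ∀ s : Set V, s ≠ Set.univ →
      (G.induce s).chromaticNumber ≤ 2 * ((G.induce s).cliqueNum : ℕ∞))
    (hG : 2 * (G.cliqueNum : ℕ∞) < G.chromaticNumber)
    (v : Fin 4 → V) (h2k2 : Induces2K2 G v)
    (hcl : G.IsClique (NS G v {0, 1, 2, 3}))
    (hA : (NS G v ∅).Nonempty) :
    CompleteTo G (NS G v ∅) (NS G v {0, 1, 2, 3}) :=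
  A_complete_to_N1234_general G h1 h2 hmin hG v h2k2 hcl
end

section
/- Let G be a (P3 ∪ P2, house)-free graph such that every proper induced subgraph G' of G satisfies χ(G') ≤ 2ω(G'), while χ(G) > 2ω(G), and suppose v1, v2, v3, v4 induce a 2K2 in G with edges v1v2 and v3v4. Let A be the set of vertices outside {v1,v2,v3,v4} with no neighbor in {v1,v2,v3,v4}, and suppose N_{{1,2,3,4}} is a nonempty clique and A ≠ ∅. If some vertex x ∈ N_{{1,2}} is not adjacent to all vertices of N_{{1,2,3,4}}, then there exists a vertex y ∈ N_{{3,4}} adjacent to x that is not adjacent to all vertices of N_{{1,2,3,4}}, and moreover |A| = 1. -/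
open SimpleGraph

/-!
In a minimal counterexample no vertex has its neighbourhood inside another's. Forbidding `P₃ ∪ P₂`
makes `A` anticomplete to `N_{12} ∪ N_{34}`; together with the house it forces every non-neighbour
`w ≠ u` of `u ∈ N_{1234}` to see both or neither end of each edge of the `2K₂`, so that
`w ∈ A ∪ N_{12} ∪ N_{34}`. Hence a vertex of `A` missing `u` would be dominated by `u`, and so would
`x` without a neighbour `y ∈ N_{34}`; such a `y` misses `u` (else a house). With the edge `x y`, `A`
is independent and every neighbour of `A` lies in the clique `N_{1234}`; so `A` is complete to
`N_{1234}` and any two vertices of `A` have the same neighbourhood.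
-/

namespace IsInducedFree

variable {V : Type*} {G : SimpleGraph V}

theorem false_of_P3uP2_s19 (h : IsInducedFree G P3uP2) {w₀ w₁ w₂ w₃ w₄ : V}
    (h01 : G.Adj w₀ w₁) (h12 : G.Adj w₁ w₂) (h34 : G.Adj w₃ w₄) (h02 : ¬ G.Adj w₀ w₂)
    (h03 : ¬ G.Adj w₀ w₃) (h04 : ¬ G.Adj w₀ w₄) (h13 : ¬ G.Adj w₁ w₃) (h14 : ¬ G.Adj w₁ w₄)
    (h23 : ¬ G.Adj w₂ w₃) (h24 : ¬ G.Adj w₂ w₄) (hne : w₀ ≠ w₂) : False := by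
  have := h01.ne; have := h12.ne; have := h34.ne
  have : w₀ ≠ w₃ := by rintro rfl; exact h13 h01.symm
  have : w₀ ≠ w₄ := by rintro rfl; exact h14 h01.symm
  have : w₁ ≠ w₃ := by rintro rfl; exact h03 h01
  have : w₁ ≠ w₄ := by rintro rfl; exact h04 h01
  have : w₂ ≠ w₃ := by rintro rfl; exact h13 h12
  have : w₂ ≠ w₄ := by rintro rfl; exact h14 h12
  refine h.false ⟨⟨![w₀, w₁, w₂, w₃, w₄], fun i j hij => ?_⟩, fun {i j} => ?_⟩
  · fin_cases i <;> fin_cases j <;> simp_all [eq_comm]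
  · show G.Adj (![w₀, w₁, w₂, w₃, w₄] i) (![w₀, w₁, w₂, w₃, w₄] j) ↔ P3uP2.Adj i j
    fin_cases i <;> fin_cases j <;> simp [P3uP2, G.adj_comm, *]

/-- `a b c d` is an induced square and `e` a roof over its side `d a`. -/
theorem false_of_house_s19 (h : IsInducedFree G house) {a b c d e : V}
    (hab : G.Adj a b) (hbc : G.Adj b c) (hcd : G.Adj c d) (hda : G.Adj d a)
    (hea : G.Adj e a) (hed : G.Adj e d) (hac : ¬ G.Adj a c) (hbd : ¬ G.Adj b d)
    (heb : ¬ G.Adj e b) (hec : ¬ G.Adj e c) : False := by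
  have := hab.ne; have := hbc.ne; have := hcd.ne; have := hda.ne; have := hea.ne
  have := hed.ne
  have : a ≠ c := by rintro rfl; exact hec hea
  have : b ≠ d := by rintro rfl; exact heb hed
  have : e ≠ b := by rintro rfl; contradiction
  have : e ≠ c := by rintro rfl; exact hac hea.symm
  refine h.false ⟨⟨![a, c, e, b, d], fun i j hij => ?_⟩, fun {i j} => ?_⟩
  · fin_cases i <;> fin_cases j <;> simp_all [eq_comm]
  · show G.Adj (![a, c, e, b, d] i) (![a, c, e, b, d] j) ↔ house.Adj i j
    fin_cases i <;> fin_cases j <;> simp_all [house, pathGraph_adj, G.adj_comm]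

end IsInducedFree

namespace SimpleGraph

variable {V : Type*} {G : SimpleGraph V}

/-- Give `a` the colour of `z`. -/
theorem chromaticNumber_le_induce_compl_of_neighborSet_subset_s19 {a z : V} (hne : a ≠ z)
    (h : G.neighborSet a ⊆ G.neighborSet z) :
    G.chromaticNumber ≤ (G.induce {a}ᶜ).chromaticNumber := by
  classical
  refine chromaticNumber_mono_of_hom
    ⟨fun w => if hw : w = a then ⟨z, hne.symm⟩ else ⟨w, hw⟩, fun {p q} hpq => ?_⟩
  by_cases hp : p = a <;> by_cases hq : q = a <;> subst_vars
  · exact absurd hpq G.irrefl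
  · simpa [hq] using h hpq
  · simpa [hp] using (h hpq.symm).symm
  · simpa [hp, hq] using hpq

theorem eq_of_neighborSet_subset [Finite V]
    (hmin : ∀ s : Set V, s ≠ Set.univ →
      (G.induce s).chromaticNumber ≤ 2 * ((G.induce s).cliqueNum : ℕ∞))
    (hG : 2 * (G.cliqueNum : ℕ∞) < G.chromaticNumber) {a z : V}
    (h : G.neighborSet a ⊆ G.neighborSet z) : a = z := by
  by_contra hne
  refine hG.not_ge ?_
  calc G.chromaticNumber ≤ (G.induce {a}ᶜ).chromaticNumber :=
        chromaticNumber_le_induce_compl_of_neighborSet_subset_s19 hne h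
    _ ≤ 2 * ((G.induce {a}ᶜ).cliqueNum : ℕ∞) :=
        hmin _ fun h => by simpa using h.ge (Set.mem_univ a)
    _ ≤ 2 * (G.cliqueNum : ℕ∞) := by gcongr; exact_mod_cast G.cliqueNum_induce_le _

end SimpleGraph

section NS

variable {V : Type*} {G : SimpleGraph V} {v : Fin 4 → V} {w : V} {S : Finset (Fin 4)}

theorem adj_of_mem_NS_s19 (hw : w ∈ NS G v S) {i : Fin 4} (hi : i ∈ S) : G.Adj w (v i) :=
  (hw.2 i).2 hi

theorem not_adj_of_mem_NS_s19 (hw : w ∈ NS G v S) {i : Fin 4} (hi : i ∉ S) : ¬ G.Adj w (v i) :=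
  fun h => hi ((hw.2 i).1 h)

theorem adj_of_mem_NS_full (hw : w ∈ NS G v {0, 1, 2, 3}) (i : Fin 4) : G.Adj w (v i) :=
  adj_of_mem_NS_s19 hw (by fin_cases i <;> decide)

theorem not_adj_of_mem_NS_empty (hw : w ∈ NS G v ∅) (i : Fin 4) : ¬ G.Adj w (v i) :=
  not_adj_of_mem_NS_s19 hw (Finset.notMem_empty i)

theorem ne_of_mem_NS {z : V} {T : Finset (Fin 4)} (hw : w ∈ NS G v S) (hz : z ∈ NS G v T)
    (hST : S ≠ T) : w ≠ z := by
  rintro rfl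
  exact hST (Finset.ext fun i => (hw.2 i).symm.trans (hz.2 i))

theorem NS_comp_perm (σ : Equiv.Perm (Fin 4)) :
    NS G (v ∘ σ) S = NS G v (S.map σ.toEmbedding) := by
  ext w
  simp only [NS, Set.mem_ofPred_eq, Function.comp_apply, Finset.mem_map_equiv]
  rw [← σ.forall_congr_right (q := fun i => w ≠ v i),
    ← σ.forall_congr_right (q := fun i => (G.Adj w (v i) ↔ σ.symm i ∈ S))]
  simp

theorem mem_NS_comp {σ : Equiv.Perm (Fin 4)} {T : Finset (Fin 4)}
    (hST : S.map σ.toEmbedding = T) (hw : w ∈ NS G v T) : w ∈ NS G (v ∘ σ) S := by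
  rwa [NS_comp_perm, hST]

theorem mem_NS_full_comp (σ : Equiv.Perm (Fin 4)) (hw : w ∈ NS G v {0, 1, 2, 3}) :
    w ∈ NS G (v ∘ σ) {0, 1, 2, 3} :=
  mem_NS_comp (by rw [show ({0, 1, 2, 3} : Finset (Fin 4)) = .univ by decide]; simp) hw

theorem mem_NS_empty_comp (σ : Equiv.Perm (Fin 4)) (hw : w ∈ NS G v ∅) :
    w ∈ NS G (v ∘ σ) ∅ :=
  mem_NS_comp (Finset.map_empty _) hw

theorem mem_NS_of_adj_iff (hw : ∀ i, w ≠ v i) (h01 : G.Adj w (v 0) ↔ G.Adj w (v 1))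
    (h23 : G.Adj w (v 2) ↔ G.Adj w (v 3)) :
    w ∈ NS G v ∅ ∨ w ∈ NS G v {0, 1} ∨ w ∈ NS G v {2, 3} ∨ w ∈ NS G v {0, 1, 2, 3} := by
  by_cases h0 : G.Adj w (v 0) <;> by_cases h2 : G.Adj w (v 2)
  · exact .inr (.inr (.inr ⟨hw, fun i => by fin_cases i <;> simp_all⟩))
  · exact .inr (.inl ⟨hw, fun i => by fin_cases i <;> simp_all⟩)
  · exact .inr (.inr (.inl ⟨hw, fun i => by fin_cases i <;> simp_all⟩))
  · exact .inl ⟨hw, fun i => by fin_cases i <;> simp_all⟩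

end NS

def swapEdges : Equiv.Perm (Fin 4) := Equiv.swap 0 2 * Equiv.swap 1 3

namespace Induces2K2

variable {V : Type*} {G : SimpleGraph V} {v : Fin 4 → V}

theorem comp_swap (hv : Induces2K2 G v) : Induces2K2 G (v ∘ Equiv.swap 0 1) := by
  obtain ⟨hinj, h01, h23, h02, h03, h12, h13⟩ := hv
  exact ⟨hinj.comp (Equiv.injective _), h01.symm, h23, h12, h13, h02, h03⟩

theorem comp_swapEdges (hv : Induces2K2 G v) : Induces2K2 G (v ∘ swapEdges) := by
  obtain ⟨hinj, h01, h23, h02, h03, h12, h13⟩ := hv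
  exact ⟨hinj.comp (Equiv.injective _), h23, h01, fun h => h02 h.symm, fun h => h12 h.symm,
    fun h => h03 h.symm, fun h => h13 h.symm⟩

variable {a u w x y c t : V}

theorem anticomplete_NS_empty_NS_01 (hv : Induces2K2 G v) (h1 : IsInducedFree G P3uP2) :
    Anticomplete G (NS G v ∅) (NS G v {0, 1}) := by
  obtain ⟨-, -, h23, h02, h03, -, -⟩ := hv
  intro c hc w hw hcw
  exact h1.false_of_P3uP2_s19 hcw (adj_of_mem_NS_s19 hw (by decide)) h23
    (not_adj_of_mem_NS_empty hc 0) (not_adj_of_mem_NS_empty hc 2)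
    (not_adj_of_mem_NS_empty hc 3) (not_adj_of_mem_NS_s19 hw (by decide))
    (not_adj_of_mem_NS_s19 hw (by decide)) h02 h03 (hc.1 0)

theorem anticomplete_NS_empty_NS_23 (hv : Induces2K2 G v) (h1 : IsInducedFree G P3uP2) :
    Anticomplete G (NS G v ∅) (NS G v {2, 3}) := fun c hc w hw =>
  hv.comp_swapEdges.anticomplete_NS_empty_NS_01 h1 c (mem_NS_empty_comp _ hc) w
    (mem_NS_comp (by decide) hw)

/-- Otherwise `w` sees `v 2` or `v 3` (a house with `u`) or neither (a `P₃ ∪ P₂`). -/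
theorem adj_one_of_adj_zero_of_not_adj (hv : Induces2K2 G v) (h1 : IsInducedFree G P3uP2)
    (h2 : IsInducedFree G house) (hu : u ∈ NS G v {0, 1, 2, 3}) (hwu : ¬ G.Adj w u)
    (hw0 : G.Adj w (v 0)) : G.Adj w (v 1) := by
  obtain ⟨-, h01, h23, h02, h03, h12, h13⟩ := hv
  have hu := adj_of_mem_NS_full hu
  by_contra hw1
  by_cases hw2 : G.Adj w (v 2)
  · exact h2.false_of_house_s19 (hu 2) hw2.symm hw0 (hu 0).symm (hu 1).symm h01.symm
      (fun h => hwu h.symm) (fun h => h02 h.symm) h12 (fun h => hw1 h.symm)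
  by_cases hw3 : G.Adj w (v 3)
  · exact h2.false_of_house_s19 (hu 3) hw3.symm hw0 (hu 0).symm (hu 1).symm h01.symm
      (fun h => hwu h.symm) (fun h => h03 h.symm) h13 (fun h => hw1 h.symm)
  exact h1.false_of_P3uP2_s19 hw0 h01 h23 hw1 hw2 hw3 h02 h03 h12 h13
    fun h => hwu (h ▸ (hu 1).symm)

theorem adj_iff_of_not_adj (hv : Induces2K2 G v) (h1 : IsInducedFree G P3uP2)
    (h2 : IsInducedFree G house) (hu : u ∈ NS G v {0, 1, 2, 3}) (hwu : ¬ G.Adj w u) :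
    (G.Adj w (v 0) ↔ G.Adj w (v 1)) ∧ (G.Adj w (v 2) ↔ G.Adj w (v 3)) :=
  ⟨⟨hv.adj_one_of_adj_zero_of_not_adj h1 h2 hu hwu,
      hv.comp_swap.adj_one_of_adj_zero_of_not_adj h1 h2 (mem_NS_full_comp _ hu) hwu⟩,
    ⟨hv.comp_swapEdges.adj_one_of_adj_zero_of_not_adj h1 h2 (mem_NS_full_comp _ hu) hwu,
      hv.comp_swapEdges.comp_swap.adj_one_of_adj_zero_of_not_adj h1 h2
        (mem_NS_full_comp _ (mem_NS_full_comp _ hu)) hwu⟩⟩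

theorem mem_NS_of_not_adj (hv : Induces2K2 G v) (h1 : IsInducedFree G P3uP2)
    (h2 : IsInducedFree G house) (hcl : G.IsClique (NS G v {0, 1, 2, 3}))
    (hu : u ∈ NS G v {0, 1, 2, 3}) (hwu : ¬ G.Adj w u) (hne : w ≠ u) :
    w ∈ NS G v ∅ ∨ w ∈ NS G v {0, 1} ∨ w ∈ NS G v {2, 3} := by
  have hw : ∀ i, w ≠ v i := fun i h => hwu (h ▸ (adj_of_mem_NS_full hu i).symm)
  obtain ⟨h01, h23⟩ := hv.adj_iff_of_not_adj h1 h2 hu hwu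
  rcases mem_NS_of_adj_iff hw h01 h23 with h | h | h | h
  · exact .inl h
  · exact .inr (.inl h)
  · exact .inr (.inr h)
  · exact absurd (hcl h hu hne) hwu

theorem adj_of_mem_NS_empty (hv : Induces2K2 G v) (h1 : IsInducedFree G P3uP2)
    (h2 : IsInducedFree G house) (hcl : G.IsClique (NS G v {0, 1, 2, 3}))
    (hdom : ∀ a z : V, G.neighborSet a ⊆ G.neighborSet z → a = z)
    (hu : u ∈ NS G v {0, 1, 2, 3}) (hx : x ∈ NS G v {0, 1}) (hxu : ¬ G.Adj x u)
    (hc : c ∈ NS G v ∅) : G.Adj c u := by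
  have hA01 := hv.anticomplete_NS_empty_NS_01 h1
  have hA23 := hv.anticomplete_NS_empty_NS_23 h1
  by_contra hcu
  refine ne_of_mem_NS hc hu (by decide) (hdom c u fun w hcw => ?_)
  by_contra hwu
  have hwu : ¬ G.Adj w u := fun h => hwu h.symm
  rcases hv.mem_NS_of_not_adj h1 h2 hcl hu hwu fun h => hcu (h ▸ hcw) with hw | hw | hw
  · -- `x - v 0 - u` and the edge `c w`
    exact h1.false_of_P3uP2_s19 (adj_of_mem_NS_s19 hx (by decide)) (adj_of_mem_NS_full hu 0).symm hcw
      hxu (fun h => hA01 c hc x hx h.symm) (fun h => hA01 w hw x hx h.symm)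
      (fun h => not_adj_of_mem_NS_empty hc 0 h.symm)
      (fun h => not_adj_of_mem_NS_empty hw 0 h.symm) (fun h => hcu h.symm)
      (fun h => hwu h.symm) (ne_of_mem_NS hx hu (by decide))
  · exact hA01 c hc w hw hcw
  · exact hA23 c hc w hw hcw

theorem exists_mem_NS_23_adj (hv : Induces2K2 G v) (h1 : IsInducedFree G P3uP2)
    (h2 : IsInducedFree G house) (hcl : G.IsClique (NS G v {0, 1, 2, 3}))
    (hdom : ∀ a z : V, G.neighborSet a ⊆ G.neighborSet z → a = z)
    (hu : u ∈ NS G v {0, 1, 2, 3}) (hx : x ∈ NS G v {0, 1}) (hxu : ¬ G.Adj x u)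
    (ha : a ∈ NS G v ∅) : ∃ y ∈ NS G v {2, 3}, G.Adj x y := by
  have hA01 := hv.anticomplete_NS_empty_NS_01 h1
  have hau := hv.adj_of_mem_NS_empty h1 h2 hcl hdom hu hx hxu ha
  by_contra! hno
  refine ne_of_mem_NS hx hu (by decide) (hdom x u fun w hxw => ?_)
  by_contra hwu
  have hwu : ¬ G.Adj w u := fun h => hwu h.symm
  rcases hv.mem_NS_of_not_adj h1 h2 hcl hu hwu fun h => hxu (h ▸ hxw) with hw | hw | hw
  · exact hA01 w hw x hx hxw.symm
  · -- `a - u - v 2` and the edge `w x`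
    exact h1.false_of_P3uP2_s19 hau (adj_of_mem_NS_full hu 2) hxw.symm
      (not_adj_of_mem_NS_empty ha 2) (hA01 a ha w hw) (hA01 a ha x hx)
      (fun h => hwu h.symm) (fun h => hxu h.symm)
      (fun h => not_adj_of_mem_NS_s19 hw (i := 2) (by decide) h.symm)
      (fun h => not_adj_of_mem_NS_s19 hx (i := 2) (by decide) h.symm) (ha.1 2)
  · exact hno w hw hxw

theorem not_adj_of_mem_NS_23 (hv : Induces2K2 G v) (h2 : IsInducedFree G house)
    (hu : u ∈ NS G v {0, 1, 2, 3}) (hx : x ∈ NS G v {0, 1}) (hxu : ¬ G.Adj x u)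
    (hy : y ∈ NS G v {2, 3}) (hxy : G.Adj x y) : ¬ G.Adj y u := by
  obtain ⟨-, -, -, h02, -, -, -⟩ := hv
  intro hyu
  -- the square `u - v 0 - x - y` with roof `v 2`
  exact h2.false_of_house_s19 (adj_of_mem_NS_full hu 0) (adj_of_mem_NS_s19 hx (by decide)).symm hxy hyu
    (adj_of_mem_NS_full hu 2).symm (adj_of_mem_NS_s19 hy (by decide)).symm (fun h => hxu h.symm)
    (fun h => not_adj_of_mem_NS_s19 hy (i := 0) (by decide) h.symm) (fun h => h02 h.symm)
    (fun h => not_adj_of_mem_NS_s19 hx (i := 2) (by decide) h.symm)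

theorem isIndepSet_NS_empty (hv : Induces2K2 G v) (h1 : IsInducedFree G P3uP2)
    (hx : x ∈ NS G v {0, 1}) (hy : y ∈ NS G v {2, 3}) (hxy : G.Adj x y) :
    G.IsIndepSet (NS G v ∅) := by
  have hA01 := hv.anticomplete_NS_empty_NS_01 h1
  have hA23 := hv.anticomplete_NS_empty_NS_23 h1
  intro c hc d hd _ hcd
  -- `x - y - v 2` and the edge `c d`
  exact h1.false_of_P3uP2_s19 hxy (adj_of_mem_NS_s19 hy (by decide)) hcd
    (not_adj_of_mem_NS_s19 hx (by decide)) (fun h => hA01 c hc x hx h.symm)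
    (fun h => hA01 d hd x hx h.symm) (fun h => hA23 c hc y hy h.symm)
    (fun h => hA23 d hd y hy h.symm) (fun h => not_adj_of_mem_NS_empty hc 2 h.symm)
    (fun h => not_adj_of_mem_NS_empty hd 2 h.symm) (hx.1 2)

theorem adj_one_of_adj_zero_of_adj (hv : Induces2K2 G v) (h1 : IsInducedFree G P3uP2)
    (h2 : IsInducedFree G house) (hu : u ∈ NS G v {0, 1, 2, 3}) (hx : x ∈ NS G v {0, 1})
    (hy : y ∈ NS G v {2, 3}) (hxy : G.Adj x y) (hxu : ¬ G.Adj x u) (hyu : ¬ G.Adj y u)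
    (hc : c ∈ NS G v ∅) (hcu : G.Adj c u) (hct : G.Adj c t) (htu : G.Adj t u)
    (ht0 : G.Adj t (v 0)) : G.Adj t (v 1) := by
  have hcx := hv.anticomplete_NS_empty_NS_01 h1 c hc x hx
  have hcy := hv.anticomplete_NS_empty_NS_23 h1 c hc y hy
  obtain ⟨-, -, -, h02, -, -, -⟩ := hv
  have hx0 : G.Adj x (v 0) := adj_of_mem_NS_s19 hx (by decide)
  have hx1 : G.Adj x (v 1) := adj_of_mem_NS_s19 hx (by decide)
  have hx2 : ¬ G.Adj x (v 2) := not_adj_of_mem_NS_s19 hx (by decide)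
  have hy2 : G.Adj y (v 2) := adj_of_mem_NS_s19 hy (by decide)
  have hy0 : ¬ G.Adj y (v 0) := not_adj_of_mem_NS_s19 hy (by decide)
  have hy1 : ¬ G.Adj y (v 1) := not_adj_of_mem_NS_s19 hy (by decide)
  by_contra ht1
  by_cases htx : G.Adj t x
  · -- the square `u - v 1 - x - t` with roof `c`
    exact h2.false_of_house_s19 (adj_of_mem_NS_full hu 1) hx1.symm htx.symm htu hcu hct
      (fun h => hxu h.symm) (fun h => ht1 h.symm) (not_adj_of_mem_NS_empty hc 1) hcx
  by_cases hty : G.Adj t y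
  · by_cases ht2 : G.Adj t (v 2)
    · -- the square `t - v 0 - x - y` with roof `v 2`
      exact h2.false_of_house_s19 ht0 hx0.symm hxy hty.symm ht2.symm hy2.symm htx
        (fun h => hy0 h.symm) (fun h => h02 h.symm) (fun h => hx2 h.symm)
    · -- the square `u - v 2 - y - t` with roof `c`
      exact h2.false_of_house_s19 (adj_of_mem_NS_full hu 2) hy2.symm hty.symm htu hcu hct
        (fun h => hyu h.symm) (fun h => ht2 h.symm) (not_adj_of_mem_NS_empty hc 2) hcy
  -- `v 1 - x - y` and the edge `c t`
  exact h1.false_of_P3uP2_s19 hx1.symm hxy hct (fun h => hy1 h.symm)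
    (fun h => not_adj_of_mem_NS_empty hc 1 h.symm) (fun h => ht1 h.symm) (fun h => hcx h.symm)
    (fun h => htx h.symm) (fun h => hcy h.symm) (fun h => hty h.symm) (hy.1 1).symm

theorem adj_iff_of_adj (hv : Induces2K2 G v) (h1 : IsInducedFree G P3uP2)
    (h2 : IsInducedFree G house) (hu : u ∈ NS G v {0, 1, 2, 3}) (hx : x ∈ NS G v {0, 1})
    (hy : y ∈ NS G v {2, 3}) (hxy : G.Adj x y) (hxu : ¬ G.Adj x u) (hyu : ¬ G.Adj y u)
    (hc : c ∈ NS G v ∅) (hcu : G.Adj c u) (hct : G.Adj c t) (htu : G.Adj t u) :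
    (G.Adj t (v 0) ↔ G.Adj t (v 1)) ∧ (G.Adj t (v 2) ↔ G.Adj t (v 3)) := by
  have hv' := hv.comp_swapEdges
  have hu' := mem_NS_full_comp swapEdges hu
  have hc' := mem_NS_empty_comp swapEdges hc
  have hx' : x ∈ NS G (v ∘ swapEdges) {2, 3} := mem_NS_comp (by decide) hx
  have hy' : y ∈ NS G (v ∘ swapEdges) {0, 1} := mem_NS_comp (by decide) hy
  refine ⟨⟨hv.adj_one_of_adj_zero_of_adj h1 h2 hu hx hy hxy hxu hyu hc hcu hct htu, ?_⟩,
    ⟨hv'.adj_one_of_adj_zero_of_adj h1 h2 hu' hy' hx' hxy.symm hyu hxu hc' hcu hct htu, ?_⟩⟩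
  · exact hv.comp_swap.adj_one_of_adj_zero_of_adj h1 h2 (mem_NS_full_comp _ hu)
      (mem_NS_comp (by decide) hx) (mem_NS_comp (by decide) hy) hxy hxu hyu
      (mem_NS_empty_comp _ hc) hcu hct htu
  · exact hv'.comp_swap.adj_one_of_adj_zero_of_adj h1 h2 (mem_NS_full_comp _ hu')
      (mem_NS_comp (by decide) hy') (mem_NS_comp (by decide) hx') hxy.symm hyu hxu
      (mem_NS_empty_comp _ hc') hcu hct htu

theorem mem_NS_full_of_adj (hv : Induces2K2 G v) (h1 : IsInducedFree G P3uP2)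
    (h2 : IsInducedFree G house) (hcl : G.IsClique (NS G v {0, 1, 2, 3}))
    (hu : u ∈ NS G v {0, 1, 2, 3}) (hx : x ∈ NS G v {0, 1})
    (hy : y ∈ NS G v {2, 3}) (hxy : G.Adj x y) (hxu : ¬ G.Adj x u) (hyu : ¬ G.Adj y u)
    (hc : c ∈ NS G v ∅) (hcu : G.Adj c u) (hct : G.Adj c t) : t ∈ NS G v {0, 1, 2, 3} := by
  have hA := hv.isIndepSet_NS_empty h1 hx hy hxy
  have htA : t ∉ NS G v ∅ := fun ht => hA hc ht (fun h => G.irrefl (h ▸ hct)) hct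
  have ht01 : t ∉ NS G v {0, 1} := fun ht => hv.anticomplete_NS_empty_NS_01 h1 c hc t ht hct
  have ht23 : t ∉ NS G v {2, 3} := fun ht => hv.anticomplete_NS_empty_NS_23 h1 c hc t ht hct
  obtain rfl | htu := eq_or_ne t u
  · exact hu
  have htu : G.Adj t u := by
    by_contra htu'
    rcases hv.mem_NS_of_not_adj h1 h2 hcl hu htu' htu with ht | ht | ht <;> contradiction
  have ht : ∀ i, t ≠ v i := fun i h => not_adj_of_mem_NS_empty hc i (h ▸ hct)
  obtain ⟨h01, h23⟩ := hv.adj_iff_of_adj h1 h2 hu hx hy hxy hxu hyu hc hcu hct htu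
  rcases mem_NS_of_adj_iff ht h01 h23 with ht | ht | ht | ht <;> first | contradiction | exact ht

theorem NS_empty_eq_singleton (hv : Induces2K2 G v) (h1 : IsInducedFree G P3uP2)
    (h2 : IsInducedFree G house) (hcl : G.IsClique (NS G v {0, 1, 2, 3}))
    (hdom : ∀ a z : V, G.neighborSet a ⊆ G.neighborSet z → a = z)
    (hu : u ∈ NS G v {0, 1, 2, 3}) (hx : x ∈ NS G v {0, 1})
    (hy : y ∈ NS G v {2, 3}) (hxy : G.Adj x y) (hxu : ¬ G.Adj x u) (hyu : ¬ G.Adj y u)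
    (ha : a ∈ NS G v ∅) : NS G v ∅ = {a} := by
  have hM : ∀ c ∈ NS G v ∅, ∀ t, G.Adj c t → t ∈ NS G v {0, 1, 2, 3} := fun c hc _ hct =>
    hv.mem_NS_full_of_adj h1 h2 hcl hu hx hy hxy hxu hyu hc
      (hv.adj_of_mem_NS_empty h1 h2 hcl hdom hu hx hxu hc) hct
  -- a vertex of `A` missing `w ∈ N_{1234}` would be dominated by `w`, as `N_{1234}` is a clique
  have hAM : ∀ c ∈ NS G v ∅, ∀ w ∈ NS G v {0, 1, 2, 3}, G.Adj c w := by
    intro c hc w hw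
    by_contra hcw
    refine ne_of_mem_NS hc hw (by decide) (hdom c w fun t hct => ?_)
    exact hcl hw (hM c hc t hct) fun h => hcw (h ▸ hct)
  refine Set.eq_singleton_iff_unique_mem.2 ⟨ha, fun b hb => hdom b a fun t hbt => ?_⟩
  exact hAM a ha t (hM b hb t hbt)

end Induces2K2

theorem exists_bad_partner_in_N34_and_A_singleton_general
    {V : Type*} [Fintype V] (G : SimpleGraph V)
    (h1 : IsInducedFree G P3uP2) (h2 : IsInducedFree G house)
    (hmin : ∀ s : Set V, s ≠ Set.univ →
      (G.induce s).chromaticNumber ≤ 2 * ((G.induce s).cliqueNum : ℕ∞))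
    (hG : 2 * (G.cliqueNum : ℕ∞) < G.chromaticNumber)
    (v : Fin 4 → V) (h2k2 : Induces2K2 G v)
    (hcl : G.IsClique (NS G v {0, 1, 2, 3}))
    (hA : (NS G v ∅).Nonempty)
    (x : V) (hx : x ∈ NS G v {0, 1}) (hxnc : ¬ ∀ u ∈ NS G v {0, 1, 2, 3}, G.Adj x u) :
    (∃ y ∈ NS G v {2, 3}, G.Adj x y ∧ ¬ ∀ u ∈ NS G v {0, 1, 2, 3}, G.Adj y u) ∧
    (NS G v ∅).ncard = 1 := by
  have hdom : ∀ a z : V, G.neighborSet a ⊆ G.neighborSet z → a = z :=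
    fun _ _ => G.eq_of_neighborSet_subset hmin hG
  obtain ⟨u, hu, hxu⟩ := not_forall₂.mp hxnc
  obtain ⟨a, ha⟩ := hA
  obtain ⟨y, hy, hxy⟩ := h2k2.exists_mem_NS_23_adj h1 h2 hcl hdom hu hx hxu ha
  have hyu := h2k2.not_adj_of_mem_NS_23 h2 hu hx hxu hy hxy
  refine ⟨⟨y, hy, hxy, fun hy' => hyu (hy' u hu)⟩, Set.ncard_eq_one.2 ⟨a, ?_⟩⟩
  exact h2k2.NS_empty_eq_singleton h1 h2 hcl hdom hu hx hy hxy hxu hyu ha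

theorem exists_bad_partner_in_N34_and_A_singleton
    {V : Type*} [Fintype V] (G : SimpleGraph V)
    (h1 : IsInducedFree G P3uP2) (h2 : IsInducedFree G house)
    (hmin : ∀ s : Set V, s ≠ Set.univ →
      (G.induce s).chromaticNumber ≤ 2 * ((G.induce s).cliqueNum : ℕ∞))
    (hG : 2 * (G.cliqueNum : ℕ∞) < G.chromaticNumber)
    (v : Fin 4 → V) (h2k2 : Induces2K2 G v)
    (hcl : G.IsClique (NS G v {0, 1, 2, 3})) (hne : (NS G v {0, 1, 2, 3}).Nonempty)
    (hA : (NS G v ∅).Nonempty)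
    (x : V) (hx : x ∈ NS G v {0, 1}) (hxnc : ¬ ∀ u ∈ NS G v {0, 1, 2, 3}, G.Adj x u) :
    (∃ y ∈ NS G v {2, 3}, G.Adj x y ∧ ¬ ∀ u ∈ NS G v {0, 1, 2, 3}, G.Adj y u) ∧
    (NS G v ∅).ncard = 1 :=
  exists_bad_partner_in_N34_and_A_singleton_general G h1 h2 hmin hG v h2k2 hcl hA x hx hxnc
end
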